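/- arXiv:1507.00249 — 4 statements merged into one kernel-verified Lean document; each statement's English description precedes it below -/
import Mathlib

section
/- Let a, b ≥ 1 and let P be the product of a chain with a elements and a chain with b elements (the poset of boxes of an a×b rectangular Young diagram). Then the expected jaggedness of an order ideal of P under the linear distribution μ_lin equals 2ab/(a+b), the harmonic mean of a and b. -/
open Finset
open scoped Classical

noncomputable section

variable {α : Type*} [Fintype α] [PartialOrder α]

/-- `I` is an order ideal (down-set) of the finite poset `α`. -/
def IsIdeal (I : Finset α) : Prop := ∀ p ∈ I, ∀ q : α, q ≤ p → q ∈ I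

/-- The set `J(P)` of all order ideals of the finite poset `α`. -/
def idealsFinset (α : Type*) [Fintype α] [PartialOrder α] : Finset (Finset α) :=
  Finset.univ.filter fun I => IsIdeal I

/-- `p` can be toggled in to the order ideal `I`. -/
def CanToggleIn (I : Finset α) (p : α) : Prop := p ∉ I ∧ IsIdeal (insert p I)

/-- `p` can be toggled out of the order ideal `I`. -/
def CanToggleOut (I : Finset α) (p : α) : Prop := p ∈ I ∧ IsIdeal (I.erase p)

/-- The jaggedness of `I`: the number of elements that can be toggled in,
plus the number of elements that can be toggled out. -/
def jag (I : Finset α) : ℕ :=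
  (Finset.univ.filter fun p => CanToggleIn I p).card +
  (Finset.univ.filter fun p => CanToggleOut I p).card

/-- The probability, under `μ`, that a random order ideal satisfies `E`. -/
def prIdeal (μ : Finset α → ℝ) (E : Finset α → Prop) : ℝ :=
  ∑ I ∈ (idealsFinset α).filter E, μ I

/-- `μ` is toggle-symmetric: for every `p`, the probability that `p` can be toggled in
equals the probability that `p` can be toggled out. -/
def ToggleSymmetric (μ : Finset α → ℝ) : Prop :=
  ∀ p : α, prIdeal μ (fun I => CanToggleIn I p) = prIdeal μ (fun I => CanToggleOut I p)

/-- `μ` is a probability distribution on `J(P)`. -/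
def IsProbDist (μ : Finset α → ℝ) : Prop :=
  (∀ I, 0 ≤ μ I) ∧ (∀ I, ¬ IsIdeal I → μ I = 0) ∧ (∑ I ∈ idealsFinset α, μ I = 1)

/-- The expectation of the statistic `f` with respect to `μ`. -/
def expectStat (μ : Finset α → ℝ) (f : Finset α → ℝ) : ℝ :=
  ∑ I ∈ idealsFinset α, μ I * f I

/-- The linear extensions of `α`: order-preserving bijections `α ≃ {1,…,n}`. -/
def linExts (α : Type*) [Fintype α] [PartialOrder α] :
    Finset (α ≃ Fin (Fintype.card α)) :=
  Finset.univ.filter fun e => ∀ p q : α, p ≤ q → e p ≤ e q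

/-- The linear distribution `μ_lin` on `J(P)`: the distribution of `ℓ⁻¹({1,…,k})` for a
uniformly random linear extension `ℓ` and uniform `k ∈ {0,1,…,n}`. -/
def muLin (α : Type*) [Fintype α] [PartialOrder α] (I : Finset α) : ℝ :=
  (∑ e ∈ linExts α, ∑ k ∈ Finset.range (Fintype.card α + 1),
      if Finset.univ.filter (fun p => (e p : ℕ) < k) = I then (1 : ℝ) else 0) /
    ((linExts α).card * (Fintype.card α + 1))

/-!
`μ_lin` is toggle-symmetric. If `p` can be toggled in to `ℓ⁻¹({1,…,k})`, then every element
below `p` sits before position `k`, so cyclically shifting the positions `k, …, ℓ p` moves `p` to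
position `k` and yields a linear extension `ℓ'` such that `p` can be toggled out of
`ℓ'⁻¹({1,…,ℓ p + 1})`; the inverse shift undoes this. Hence every toggleability statistic
`T_p = T⁺_p - T⁻_p` has mean zero.

In the `a × b` rectangle an order ideal is described by its row lengths: row `i` has an
in-toggle exactly when it is shorter than row `i - 1` (or than `b`, for the top row), and an
out-toggle exactly when it is longer than row `i + 1` (or than `0`, for the bottom row).
Abel summation over the rows, and over the columns via the transposed ideal, gives for every
order ideal `I` the identity
`(a + b) jag I = 2ab + ∑_{(i,j)} (b (2i + 1 - a) + a (2j + 1 - b)) T_{(i,j)}(I)`,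
whose expectation under a toggle-symmetric distribution is the theorem.
-/
theorem Fin.val_cycleIcc {n : ℕ} {u v : Fin n} (huv : u ≤ v) (x : Fin n) :
    (cycleIcc u v x : ℕ) =
      if (x : ℕ) < u ∨ (v : ℕ) < x then (x : ℕ) else if (x : ℕ) = v then (u : ℕ) else x + 1 := by
  have := NeZero.of_pos u.pos
  rcases lt_or_ge x u with hxu | hux
  · simp [cycleIcc_of_lt hxu, Fin.lt_def.1 hxu]
  rcases lt_or_ge v x with hvx | hxv
  · simp [cycleIcc_of_gt hvx, Fin.lt_def.1 hvx]
  rw [Fin.le_def] at hux hxv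
  rcases hxv.eq_or_lt with hxv | hxv
  · rw [Fin.ext hxv, cycleIcc_of_last huv]
    simp [huv.not_gt]
  · rw [cycleIcc_of_ge_of_lt (Fin.le_def.2 hux) hxv, Fin.val_add_one_of_lt' (by omega)]
    split_ifs <;> omega

theorem Fin.val_cycleIcc_symm {n : ℕ} {u v : Fin n} (huv : u ≤ v) (y : Fin n) :
    ((cycleIcc u v).symm y : ℕ) =
      if (y : ℕ) < u ∨ (v : ℕ) < y then (y : ℕ) else if (y : ℕ) = u then (v : ℕ) else y - 1 := by
  obtain ⟨x, rfl⟩ := (cycleIcc u v).surjective y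
  rw [Equiv.symm_apply_apply, val_cycleIcc huv]
  rw [Fin.le_def] at huv
  split_ifs <;> omega

theorem Fin.mem_iff_lt_card_of_isLowerSet {n : ℕ} {S : Finset (Fin n)}
    (hS : IsLowerSet (S : Set (Fin n))) {j : Fin n} : j ∈ S ↔ (j : ℕ) < #S := by
  constructor
  · intro hj
    have : Iic j ⊆ S := fun k hk => hS (mem_Iic.1 hk) hj
    simpa using card_le_card this
  · intro hj
    by_contra hjS
    have : S ⊆ Iio j := fun k hk => mem_Iio.2 (lt_of_not_ge fun hjk => hjS (hS hjk hk))
    have := card_le_card this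
    simp only [Fin.card_Iio] at this
    omega

theorem sum_range_mul_sub_eq (g : ℕ → ℤ) (a : ℕ) :
    ∑ i ∈ range a, (2 * i + 1 - a : ℤ) * (g i - g (i + 1)) =
      ∑ i ∈ range a, (g i + g (i + 1)) - a * (g 0 + g a) := by
  have key (i : ℕ) : (2 * i + 1 - a : ℤ) * (g i - g (i + 1)) = (g i + g (i + 1)) +
      ((2 * i - a) * g i - (2 * (i + 1 : ℕ) - a) * g (i + 1)) := by
    push_cast; ring
  rw [sum_congr rfl fun i _ => key i, sum_add_distrib,
    sum_range_sub' (fun i : ℕ => (2 * i - a : ℤ) * g i)]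
  push_cast; ring

theorem Fin.sum_ite_val_eq {n c : ℕ} (hc : c < n) :
    ∑ j : Fin n, (if (j : ℕ) = c then 1 else 0 : ℤ) = 1 := by
  simpa [Fin.ext_iff] using Fintype.sum_ite_eq' (⟨c, hc⟩ : Fin n) (fun _ => (1 : ℤ))

section Toggles

variable {P Q : Type*} [PartialOrder P] [PartialOrder Q] {I : Finset P} {p : P}

theorem canToggleIn_iff (hI : IsIdeal I) : CanToggleIn I p ↔ p ∉ I ∧ ∀ q < p, q ∈ I := by
  refine and_congr_right fun hp => ⟨fun h q hq => ?_, fun h x hx y hyx => ?_⟩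
  · exact (mem_insert.1 (h p (mem_insert_self p I) q hq.le)).resolve_left hq.ne
  · rcases mem_insert.1 hx with rfl | hx
    · rcases hyx.eq_or_lt with rfl | hyx
      exacts [mem_insert_self _ _, mem_insert_of_mem (h y hyx)]
    · exact mem_insert_of_mem (hI x hx y hyx)

theorem canToggleOut_iff (hI : IsIdeal I) : CanToggleOut I p ↔ p ∈ I ∧ ∀ q, p < q → q ∉ I := by
  refine and_congr_right fun hp => ⟨fun h q hpq hq => ?_, fun h x hx y hyx => ?_⟩
  · exact (mem_erase.1 (h q (mem_erase.2 ⟨hpq.ne', hq⟩) p hpq.le)).1 rfl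
  · obtain ⟨hxp, hxI⟩ := mem_erase.1 hx
    refine mem_erase.2 ⟨?_, hI x hxI y hyx⟩
    rintro rfl
    exact h x (hyx.lt_of_ne hxp.symm) hxI

theorem isIdeal_map_iff (φ : P ≃o Q) :
    IsIdeal (I.map φ.toEquiv.toEmbedding) ↔ IsIdeal I := by
  simp only [IsIdeal, mem_map_equiv]
  refine ⟨fun h p hp q hqp => ?_, fun h x hx y hyx => h _ hx _ (φ.symm.monotone hyx)⟩
  simpa using h (φ p) (by simpa using hp) (φ q) (φ.monotone hqp)

theorem canToggleIn_map_iff (φ : P ≃o Q) :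
    CanToggleIn (I.map φ.toEquiv.toEmbedding) (φ p) ↔ CanToggleIn I p := by
  have := isIdeal_map_iff φ (I := insert p I)
  simp_all [CanToggleIn, map_insert]

theorem canToggleOut_map_iff (φ : P ≃o Q) :
    CanToggleOut (I.map φ.toEquiv.toEmbedding) (φ p) ↔ CanToggleOut I p := by
  have := isIdeal_map_iff φ (I := I.erase p)
  simp_all [CanToggleOut, map_erase]

/-- The toggleability statistic `T_p = T⁺_p - T⁻_p`. -/
def toggleability (I : Finset P) (p : P) : ℤ :=
  (if CanToggleIn I p then 1 else 0) - (if CanToggleOut I p then 1 else 0)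

theorem toggleability_map (φ : P ≃o Q) (I : Finset P) (p : P) :
    toggleability (I.map φ.toEquiv.toEmbedding) (φ p) = toggleability I p := by
  simp [toggleability, canToggleIn_map_iff, canToggleOut_map_iff]

end Toggles

theorem jag_eq_sum (I : Finset α) :
    (jag I : ℤ) =
      ∑ p, ((if CanToggleIn I p then 1 else 0) + (if CanToggleOut I p then 1 else 0)) := by
  simp [jag, sum_add_distrib, sum_boole]

theorem jag_map {β : Type*} [Fintype β] [PartialOrder β] (φ : α ≃o β) (I : Finset α) :
    jag (I.map φ.toEquiv.toEmbedding) = jag I := by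
  rw [← Nat.cast_inj (R := ℤ), jag_eq_sum, jag_eq_sum, ← φ.toEquiv.sum_comp]
  simp [canToggleIn_map_iff, canToggleOut_map_iff]

theorem sum_mul_toggleability (μ : Finset α → ℝ) (p : α) :
    ∑ I ∈ idealsFinset α, μ I * toggleability I p =
      prIdeal μ (CanToggleIn · p) - prIdeal μ (CanToggleOut · p) := by
  simp [prIdeal, toggleability, sum_filter, mul_sub, sum_sub_distrib]

theorem expectStat_sum_toggleability {μ : Finset α → ℝ} (hμ : ToggleSymmetric μ) (w : α → ℝ) :
    expectStat μ (fun I => ∑ p, w p * toggleability I p) = 0 := by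
  simp_rw [expectStat, mul_sum, mul_left_comm (μ _)]
  rw [sum_comm]
  simp [← mul_sum, sum_mul_toggleability, hμ _]

/-- The order ideal `ℓ⁻¹({1,…,k})`, with positions counted from `0`. -/
def initialIdeal {X : Type*} [Fintype X] (e : X ≃ Fin (Fintype.card X)) (k : ℕ) : Finset X :=
  Finset.univ.filter fun p => (e p : ℕ) < k

theorem mem_initialIdeal {X : Type*} [Fintype X] {e : X ≃ Fin (Fintype.card X)} {k : ℕ} {p : X} :
    p ∈ initialIdeal e k ↔ (e p : ℕ) < k := by
  simp [initialIdeal]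

section LinearDistribution

variable {e : α ≃ Fin (Fintype.card α)} {k : ℕ} {p : α}

theorem isIdeal_initialIdeal (he : e ∈ linExts α) (k : ℕ) : IsIdeal (initialIdeal e k) := by
  intro p hp q hqp
  rw [mem_initialIdeal] at hp ⊢
  exact lt_of_le_of_lt ((mem_filter.1 he).2 q p hqp) hp

theorem linExts_nonempty : (linExts α).Nonempty := by
  let _ : Fintype (LinearExtension α) := ‹Fintype α›
  let f := Fintype.orderIsoFinOfCardEq (LinearExtension α) rfl
  exact ⟨f.symm.toEquiv, mem_filter.2 ⟨mem_univ _, fun p q hpq =>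
    f.symm.monotone (toLinearExtension.monotone hpq)⟩⟩

variable (α) in
def linPairs : Finset ((α ≃ Fin (Fintype.card α)) × ℕ) :=
  linExts α ×ˢ range (Fintype.card α + 1)

theorem sum_muLin_mul (f : Finset α → ℝ) :
    ∑ I ∈ idealsFinset α, muLin α I * f I =
      (∑ x ∈ linPairs α, f (initialIdeal x.1 x.2)) / #(linPairs α) := by
  have hcard : (#(linPairs α) : ℝ) = #(linExts α) * (Fintype.card α + 1) := by
    simp [linPairs]
  simp_rw [hcard, muLin, div_mul_eq_mul_div, ← sum_div, sum_mul, linPairs, sum_product]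
  congr 1
  rw [sum_comm]
  refine sum_congr rfl fun e he => ?_
  rw [sum_comm]
  refine sum_congr rfl fun k _ => ?_
  have hmem : initialIdeal e k ∈ idealsFinset α :=
    mem_filter.2 ⟨mem_univ _, isIdeal_initialIdeal he k⟩
  simp_rw [ite_mul, one_mul, zero_mul]
  exact (sum_ite_eq (idealsFinset α) _ f).trans (if_pos hmem)

theorem sum_muLin_eq_one : ∑ I ∈ idealsFinset α, muLin α I = 1 := by
  have hpos : 0 < #(linPairs α) :=
    card_pos.2 (linExts_nonempty.product nonempty_range_add_one)
  simpa [hpos.ne'] using sum_muLin_mul (α := α) (fun _ => 1)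

theorem prIdeal_muLin (E : Finset α → Prop) :
    prIdeal (muLin α) E =
      #{x ∈ linPairs α | E (initialIdeal x.1 x.2)} / #(linPairs α) := by
  simpa [prIdeal, sum_filter, sum_boole] using
    sum_muLin_mul (α := α) (fun I => if E I then 1 else 0)

theorem val_lt_val_of_mem_linExts (he : e ∈ linExts α) {q r : α} (hqr : q < r) :
    (e q : ℕ) < e r :=
  lt_of_le_of_ne ((mem_filter.1 he).2 q r hqr.le) (Fin.val_ne_of_ne (e.injective.ne hqr.ne))

theorem canToggleIn_initialIdeal_iff (he : e ∈ linExts α) :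
    CanToggleIn (initialIdeal e k) p ↔ k ≤ e p ∧ ∀ q < p, (e q : ℕ) < k := by
  simp [canToggleIn_iff (isIdeal_initialIdeal he k), mem_initialIdeal]

theorem canToggleOut_initialIdeal_iff (he : e ∈ linExts α) :
    CanToggleOut (initialIdeal e k) p ↔ (e p : ℕ) < k ∧ ∀ q, p < q → k ≤ e q := by
  simp [canToggleOut_iff (isIdeal_initialIdeal he k), mem_initialIdeal]

theorem trans_cycleIcc_mem_linExts (he : e ∈ linExts α) {u : Fin (Fintype.card α)}
    (hu : u ≤ e p) (hlow : ∀ q < p, (e q : ℕ) < u) :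
    e.trans (Fin.cycleIcc u (e p)) ∈ linExts α := by
  refine mem_filter.2 ⟨mem_univ _, fun q r hqr => ?_⟩
  rcases hqr.eq_or_lt with rfl | hqr
  · exact le_rfl
  have hlt := val_lt_val_of_mem_linExts he hqr
  simp only [Equiv.trans_apply, Fin.le_def, Fin.val_cycleIcc hu]
  rw [Fin.le_def] at hu
  by_cases hr : r = p
  · subst hr; have := hlow q hqr; split_ifs <;> omega
  by_cases hq : q = p
  · subst hq; split_ifs <;> omega
  have := Fin.val_ne_of_ne (e.injective.ne hq)
  have := Fin.val_ne_of_ne (e.injective.ne hr)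
  split_ifs <;> omega

theorem trans_cycleIcc_symm_mem_linExts (he : e ∈ linExts α) {w : Fin (Fintype.card α)}
    (hw : e p ≤ w) (hhigh : ∀ q, p < q → (w : ℕ) < e q) :
    e.trans (Fin.cycleIcc (e p) w).symm ∈ linExts α := by
  refine mem_filter.2 ⟨mem_univ _, fun q r hqr => ?_⟩
  rcases hqr.eq_or_lt with rfl | hqr
  · exact le_rfl
  have hlt := val_lt_val_of_mem_linExts he hqr
  simp only [Equiv.trans_apply, Fin.le_def, Fin.val_cycleIcc_symm hw]
  rw [Fin.le_def] at hw
  by_cases hq : q = p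
  · subst hq; have := hhigh r hqr; split_ifs <;> omega
  by_cases hr : r = p
  · subst hr; split_ifs <;> omega
  have := Fin.val_ne_of_ne (e.injective.ne hq)
  have := Fin.val_ne_of_ne (e.injective.ne hr)
  split_ifs <;> omega

theorem canToggleOut_trans_cycleIcc (he : e ∈ linExts α) (hk : k < Fintype.card α)
    (h : CanToggleIn (initialIdeal e k) p) :
    CanToggleOut (initialIdeal (e.trans (Fin.cycleIcc ⟨k, hk⟩ (e p))) (e p + 1)) p := by
  rw [canToggleIn_initialIdeal_iff he] at h
  have hu : (⟨k, hk⟩ : Fin _) ≤ e p := Fin.le_def.2 h.1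
  rw [canToggleOut_initialIdeal_iff (trans_cycleIcc_mem_linExts he hu h.2)]
  refine ⟨?_, fun q hpq => ?_⟩
  · simp [Fin.val_cycleIcc hu]
    split_ifs <;> omega
  · have := val_lt_val_of_mem_linExts he hpq
    simp [Fin.val_cycleIcc hu]
    split_ifs <;> omega

theorem canToggleIn_trans_cycleIcc_symm (he : e ∈ linExts α) (hk : k - 1 < Fintype.card α)
    (h : CanToggleOut (initialIdeal e k) p) :
    CanToggleIn (initialIdeal (e.trans (Fin.cycleIcc (e p) ⟨k - 1, hk⟩).symm) (e p)) p := by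
  rw [canToggleOut_initialIdeal_iff he] at h
  have hw : e p ≤ (⟨k - 1, hk⟩ : Fin _) := Fin.le_def.2 (by simp; omega)
  rw [canToggleIn_initialIdeal_iff (trans_cycleIcc_symm_mem_linExts he hw fun q hpq => ?_)]
  · refine ⟨?_, fun q hqp => ?_⟩
    · simp [Fin.val_cycleIcc_symm hw]
      split_ifs <;> omega
    · have := val_lt_val_of_mem_linExts he hqp
      simp [Fin.val_cycleIcc_symm hw]
      split_ifs <;> omega
  · have := h.2 q hpq
    simp
    omega

theorem card_canToggleIn_eq_card_canToggleOut (p : α) :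
    #{x ∈ linPairs α | CanToggleIn (initialIdeal x.1 x.2) p} =
      #{x ∈ linPairs α | CanToggleOut (initialIdeal x.1 x.2) p} := by
  have le_of_in {x} (hx : x ∈ {x ∈ linPairs α | CanToggleIn (initialIdeal x.1 x.2) p}) :
      x.2 ≤ x.1 p := by
    simpa [mem_initialIdeal] using (mem_filter.1 hx).2.1
  have lt_of_out {x} (hx : x ∈ {x ∈ linPairs α | CanToggleOut (initialIdeal x.1 x.2) p}) :
      x.1 p < x.2 ∧ x.2 - 1 < Fintype.card α := by
    have := mem_initialIdeal.1 (mem_filter.1 hx).2.1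
    have := (mem_product.1 (mem_filter.1 hx).1).2
    simp only [mem_range] at this
    omega
  refine card_bij'
    (fun x hx =>
      (x.1.trans (Fin.cycleIcc ⟨x.2, (le_of_in hx).trans_lt (x.1 p).isLt⟩ (x.1 p)), x.1 p + 1))
    (fun x hx => (x.1.trans (Fin.cycleIcc (x.1 p) ⟨x.2 - 1, (lt_of_out hx).2⟩).symm, x.1 p))
    (fun x hx => ?_) (fun x hx => ?_) (fun x hx => ?_) (fun x hx => ?_)
  · obtain ⟨hx, hin⟩ := mem_filter.1 hx
    have he := (mem_product.1 hx).1
    have h := (canToggleIn_initialIdeal_iff he).1 hin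
    exact mem_filter.2 ⟨mem_product.2 ⟨trans_cycleIcc_mem_linExts he (Fin.le_def.2 h.1) h.2,
      by simp⟩, canToggleOut_trans_cycleIcc he _ hin⟩
  · obtain ⟨hx, hout⟩ := mem_filter.1 hx
    have he := (mem_product.1 hx).1
    have h := (canToggleOut_initialIdeal_iff he).1 hout
    refine mem_filter.2 ⟨mem_product.2 ⟨trans_cycleIcc_symm_mem_linExts he ?_ fun q hpq => ?_,
      by simp⟩, canToggleIn_trans_cycleIcc_symm he _ hout⟩
    · simp [Fin.le_def]; omega
    · have := h.2 q hpq
      simp; omega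
  · have := NeZero.of_pos (x.1 p).pos
    ext <;> simp [Fin.cycleIcc_of_last (i := ⟨x.2, _⟩) (le_of_in hx)]
  · have := NeZero.of_pos (x.1 p).pos
    have := (lt_of_out hx).1
    have hw : (Fin.cycleIcc (x.1 p) ⟨x.2 - 1, (lt_of_out hx).2⟩).symm (x.1 p) =
        ⟨x.2 - 1, (lt_of_out hx).2⟩ :=
      (Equiv.symm_apply_eq _).2 (Fin.cycleIcc_of_last (Nat.le_sub_one_of_lt this)).symm
    ext <;> simp [hw]
    omega

end LinearDistribution

theorem toggleSymmetric_muLin : ToggleSymmetric (muLin α) := fun p => by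
  rw [prIdeal_muLin, prIdeal_muLin, card_canToggleIn_eq_card_canToggleOut]

section Rectangle

variable {a b : ℕ} {I : Finset (Fin a × Fin b)}

/-- Index `i + 1` holds the length of row `i` of `I`; index `0` is a virtual full row above
the rectangle, and indices past the last row are empty. -/
def paddedRowLength (I : Finset (Fin a × Fin b)) : ℕ → ℕ
  | 0 => b
  | i + 1 => #{j : Fin b | ∃ h : i < a, (⟨i, h⟩, j) ∈ I}

def rowDescent (I : Finset (Fin a × Fin b)) (k : ℕ) : ℤ :=
  if paddedRowLength I (k + 1) < paddedRowLength I k then 1 else 0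

theorem paddedRowLength_le (k : ℕ) : paddedRowLength I k ≤ b := by
  cases k with
  | zero => exact le_rfl
  | succ i => exact (card_filter_le _ _).trans (by simp)

theorem paddedRowLength_of_lt {k : ℕ} (hk : a < k) : paddedRowLength I k = 0 := by
  obtain ⟨i, rfl⟩ := Nat.exists_eq_add_of_lt hk
  simp [paddedRowLength]

theorem antitone_paddedRowLength (hI : IsIdeal I) : Antitone (paddedRowLength I) := by
  refine antitone_nat_of_succ_le fun k => ?_
  cases k with
  | zero => exact paddedRowLength_le 1
  | succ i =>
    refine card_le_card fun j hj => ?_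
    simp only [mem_filter, mem_univ, true_and] at hj ⊢
    obtain ⟨h, hj⟩ := hj
    exact ⟨by omega, hI _ hj _ (Prod.mk_le_mk.2 ⟨Fin.le_def.2 (Nat.le_succ i), le_rfl⟩)⟩

theorem mem_iff_lt_paddedRowLength (hI : IsIdeal I) {i : Fin a} {j : Fin b} :
    (i, j) ∈ I ↔ (j : ℕ) < paddedRowLength I (i + 1) := by
  have hrow : paddedRowLength I (i + 1) = #{j : Fin b | (i, j) ∈ I} := by
    simp [paddedRowLength, i.isLt]
  rw [hrow, ← Fin.mem_iff_lt_card_of_isLowerSet, mem_filter]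
  · simp
  · intro j' j hjj' hj
    simp only [coe_filter, mem_univ, true_and, Set.mem_ofPred_eq] at hj ⊢
    exact hI _ hj _ (Prod.mk_le_mk.2 ⟨le_rfl, hjj'⟩)

theorem canToggleIn_iff_row (hI : IsIdeal I) {i : Fin a} {j : Fin b} :
    CanToggleIn I (i, j) ↔ (j : ℕ) = paddedRowLength I (i + 1) ∧
      paddedRowLength I (i + 1) < paddedRowLength I i := by
  have hL := antitone_paddedRowLength hI
  rw [canToggleIn_iff hI, mem_iff_lt_paddedRowLength hI, not_lt]
  constructor
  · rintro ⟨hj, hlow⟩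
    have hle : (j : ℕ) ≤ paddedRowLength I (i + 1) := by
      rcases Nat.eq_zero_or_pos j with h | h
      · omega
      have := (mem_iff_lt_paddedRowLength hI).1 (hlow (i, ⟨j - 1, by omega⟩)
        (Prod.lt_iff.2 (Or.inr ⟨le_rfl, Fin.lt_def.2 (by simp; omega)⟩)))
      simp only at this
      omega
    have hlt : (j : ℕ) < paddedRowLength I i := by
      rcases i with ⟨_ | i, hi⟩
      · exact j.isLt
      · exact (mem_iff_lt_paddedRowLength hI).1 (hlow (⟨i, by omega⟩, j)
          (Prod.lt_iff.2 (Or.inl ⟨Fin.lt_def.2 (by simp), le_rfl⟩)))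
    omega
  · rintro ⟨hj, hdrop⟩
    refine ⟨hj.ge, fun ⟨i', j'⟩ hq => (mem_iff_lt_paddedRowLength hI).2 ?_⟩
    rcases Prod.lt_iff.1 hq with ⟨hi, hj'⟩ | ⟨hi, hj'⟩
    · have := hL (show (i' : ℕ) + 1 ≤ i from hi)
      simp only [Fin.le_def] at hj'
      omega
    · have := hL (show (i' : ℕ) + 1 ≤ i + 1 from Nat.succ_le_succ hi)
      simp only [Fin.lt_def] at hj'
      omega

theorem canToggleOut_iff_row (hI : IsIdeal I) {i : Fin a} {j : Fin b} :
    CanToggleOut I (i, j) ↔ (j : ℕ) + 1 = paddedRowLength I (i + 1) ∧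
      paddedRowLength I (i + 1 + 1) < paddedRowLength I (i + 1) := by
  have hL := antitone_paddedRowLength hI
  rw [canToggleOut_iff hI, mem_iff_lt_paddedRowLength hI]
  constructor
  · rintro ⟨hj, hhigh⟩
    have hle : paddedRowLength I (i + 1) ≤ j + 1 := by
      rcases lt_or_ge ((j : ℕ) + 1) b with h | h
      · have := hhigh (i, ⟨j + 1, h⟩) (Prod.lt_iff.2 (Or.inr ⟨le_rfl, Fin.lt_def.2 (by simp)⟩))
        rw [mem_iff_lt_paddedRowLength hI] at this
        simp only [not_lt] at this
        omega
      · exact (paddedRowLength_le _).trans h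
    have hdrop : paddedRowLength I (i + 1 + 1) ≤ j := by
      rcases lt_or_ge ((i : ℕ) + 1) a with h | h
      · have := hhigh (⟨i + 1, h⟩, j) (Prod.lt_iff.2 (Or.inl ⟨Fin.lt_def.2 (by simp), le_rfl⟩))
        rwa [mem_iff_lt_paddedRowLength hI, not_lt] at this
      · rw [paddedRowLength_of_lt (by omega)]
        exact Nat.zero_le _
    omega
  · rintro ⟨hj, hdrop⟩
    refine ⟨by omega, fun ⟨i', j'⟩ hq => ?_⟩
    rw [mem_iff_lt_paddedRowLength hI, not_lt]
    rcases Prod.lt_iff.1 hq with ⟨hi, hj'⟩ | ⟨hi, hj'⟩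
    · have := hL (show (i : ℕ) + 1 + 1 ≤ i' + 1 from Nat.succ_le_succ hi)
      simp only [Fin.le_def] at hj'
      omega
    · have := hL (show (i : ℕ) + 1 ≤ i' + 1 from Nat.succ_le_succ hi)
      simp only [Fin.lt_def] at hj'
      omega

theorem sum_canToggleIn_row (hI : IsIdeal I) (i : Fin a) :
    ∑ j : Fin b, (if CanToggleIn I (i, j) then 1 else 0 : ℤ) = rowDescent I i := by
  simp only [canToggleIn_iff_row hI, rowDescent]
  split_ifs with h
  · simpa [h] using Fin.sum_ite_val_eq (h.trans_le (paddedRowLength_le _))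
  · simp [h]

theorem sum_canToggleOut_row (hI : IsIdeal I) (i : Fin a) :
    ∑ j : Fin b, (if CanToggleOut I (i, j) then 1 else 0 : ℤ) = rowDescent I (i + 1) := by
  simp only [canToggleOut_iff_row hI, rowDescent]
  split_ifs with h
  · have := paddedRowLength_le (I := I) (i + 1)
    have hval (j : Fin b) : (j : ℕ) + 1 = paddedRowLength I (i + 1) ↔
        (j : ℕ) = paddedRowLength I (i + 1) - 1 := by omega
    simpa [h, hval] using
      Fin.sum_ite_val_eq (n := b) (c := paddedRowLength I (i + 1) - 1) (by omega)
  · simp [h]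

theorem jag_eq_sum_rowDescent (hI : IsIdeal I) :
    (jag I : ℤ) = ∑ i ∈ range a, (rowDescent I i + rowDescent I (i + 1)) := by
  rw [jag_eq_sum, Fintype.sum_prod_type, ← Fin.sum_univ_eq_sum_range]
  simp only [sum_add_distrib, sum_canToggleIn_row hI, sum_canToggleOut_row hI]

theorem sum_mul_toggleability_row (hI : IsIdeal I) (f : ℕ → ℤ) :
    ∑ p : Fin a × Fin b, f p.1 * toggleability I p =
      ∑ i ∈ range a, f i * (rowDescent I i - rowDescent I (i + 1)) := by
  rw [Fintype.sum_prod_type, ← Fin.sum_univ_eq_sum_range (fun i => f i * _)]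
  simp only [← mul_sum, toggleability, sum_sub_distrib, sum_canToggleIn_row hI,
    sum_canToggleOut_row hI]

theorem sum_mul_toggleability_row_eq (hI : IsIdeal I) :
    ∑ p : Fin a × Fin b, (2 * p.1 + 1 - a : ℤ) * toggleability I p =
      jag I - a * (rowDescent I 0 + rowDescent I a) := by
  rw [sum_mul_toggleability_row hI (fun i => 2 * i + 1 - a), jag_eq_sum_rowDescent hI,
    sum_range_mul_sub_eq]

theorem rowDescent_zero (hI : IsIdeal I) (ha : 0 < a) (hb : 0 < b) :
    rowDescent I 0 = if (⟨0, ha⟩, ⟨b - 1, by omega⟩) ∈ I then 0 else 1 := by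
  have := paddedRowLength_le (I := I) 1
  simp only [rowDescent, mem_iff_lt_paddedRowLength hI]
  simp only [paddedRowLength]
  split_ifs <;> omega

theorem rowDescent_last (hI : IsIdeal I) (ha : 0 < a) (hb : 0 < b) :
    rowDescent I a = if (⟨a - 1, by omega⟩, ⟨0, hb⟩) ∈ I then 1 else 0 := by
  simp only [rowDescent, mem_iff_lt_paddedRowLength hI, paddedRowLength_of_lt (Nat.lt_succ_self a),
    Nat.sub_add_cancel ha]

theorem sum_mul_toggleability_col_eq (hI : IsIdeal I) (ha : 0 < a) (hb : 0 < b) :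
    ∑ p : Fin a × Fin b, (2 * p.2 + 1 - b : ℤ) * toggleability I p =
      jag I - b * ((if (⟨a - 1, by omega⟩, ⟨0, hb⟩) ∈ I then 0 else 1) +
        (if (⟨0, ha⟩, ⟨b - 1, by omega⟩) ∈ I then 1 else 0)) := by
  let φ : Fin a × Fin b ≃o Fin b × Fin a := OrderIso.prodComm
  have hI' : IsIdeal (I.map φ.toEquiv.toEmbedding) := (isIdeal_map_iff φ).2 hI
  have h := sum_mul_toggleability_row_eq hI'
  rw [jag_map, rowDescent_zero hI' hb ha, rowDescent_last hI' hb ha,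
    ← φ.toEquiv.sum_comp] at h
  simp only [OrderIso.coe_toEquiv, toggleability_map] at h
  simpa [φ, mem_map_equiv] using h

theorem mul_jag_eq_add_sum_toggleability (hI : IsIdeal I) (ha : 0 < a) (hb : 0 < b) :
    ((a + b) * jag I : ℤ) = 2 * a * b + ∑ p : Fin a × Fin b,
      (b * (2 * p.1 + 1 - a) + a * (2 * p.2 + 1 - b) : ℤ) * toggleability I p := by
  have hrow := sum_mul_toggleability_row_eq hI
  rw [rowDescent_zero hI ha hb, rowDescent_last hI ha hb] at hrow
  simp only [add_mul, mul_assoc, sum_add_distrib, ← mul_sum, hrow,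
    sum_mul_toggleability_col_eq hI ha hb]
  split_ifs <;> ring

end Rectangle

theorem expectStat_jag_of_toggleSymmetric {a b : ℕ} (ha : 0 < a) (hb : 0 < b)
    {μ : Finset (Fin a × Fin b) → ℝ} (hμ : ∑ I ∈ idealsFinset _, μ I = 1)
    (hts : ToggleSymmetric μ) :
    expectStat μ (fun I => (jag I : ℝ)) = 2 * a * b / (a + b) := by
  have hab : (a + b : ℝ) ≠ 0 := by positivity
  let w (p : Fin a × Fin b) : ℝ := (b * (2 * p.1 + 1 - a) + a * (2 * p.2 + 1 - b)) / (a + b)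
  have hjag : ∀ I ∈ idealsFinset (Fin a × Fin b),
      μ I * jag I = μ I * (2 * a * b / (a + b) + ∑ p, w p * toggleability I p) := by
    intro I hI
    have h := congrArg (fun z : ℤ => (z : ℝ))
      (mul_jag_eq_add_sum_toggleability (mem_filter.1 hI).2 ha hb)
    push_cast at h
    congr 1
    simp only [w, div_mul_eq_mul_div, ← sum_div, ← add_div, eq_div_iff hab]
    linarith
  calc expectStat μ (fun I => (jag I : ℝ))
      = 2 * a * b / (a + b) * ∑ I ∈ idealsFinset _, μ I +
          expectStat μ (fun I => ∑ p, w p * toggleability I p) := by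
        simp only [expectStat, sum_congr rfl hjag, mul_add, sum_add_distrib, mul_sum,
          mul_comm (μ _) (2 * _ * _ / _)]
    _ = 2 * a * b / (a + b) := by rw [hμ, expectStat_sum_toggleability hts, mul_one, add_zero]

/-- Theorem 1.1 of Chan–Haddadan–Hopkins–Moci: for the product of an
`a`-element chain and a `b`-element chain, the expected jaggedness of an order ideal under
the linear distribution is `2ab/(a+b)`, the harmonic mean of `a` and `b`. -/
theorem expected_jaggedness_rectangle_linear (a b : ℕ) (ha : 1 ≤ a) (hb : 1 ≤ b) :
    expectStat (muLin (Fin a × Fin b)) (fun I => (jag I : ℝ)) =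
      2 * a * b / (a + b) :=
  expectStat_jag_of_toggleSymmetric ha hb sum_muLin_eq_one toggleSymmetric_muLin
end
end

section
/- Let σ be a connected skew shape with height a and width b, and let μ be any toggle-symmetric probability distribution on J(σ). Then the expected jaggedness of a μ-random subshape of σ equals (2ab/(a+b))·(1 + Σ_{c ∈ C(σ)} δ(c)·P_μ(c)). -/
open Finset
open scoped Classical

noncomputable section

/-- A skew Young diagram `λ/ν` (in English notation) with height `a` and width `b`.
Rows are indexed `1,…,a` from top to bottom and columns `1,…,b` from left to right;
row `i` consists of the boxes in columns `ν i + 1, …, λ i` (each row is nonempty).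
Box `[i,j]` has its southeast corner at the lattice point `(i,j)`, the point `(0,0)`
being the northwest corner of the bounding `a × b` rectangle. -/
structure SkewShape where
  a : ℕ
  b : ℕ
  ha : 1 ≤ a
  hb : 1 ≤ b
  lam : ℕ → ℕ
  nu : ℕ → ℕ
  lam_anti : ∀ i j : ℕ, 1 ≤ i → i ≤ j → j ≤ a → lam j ≤ lam i
  nu_anti : ∀ i j : ℕ, 1 ≤ i → i ≤ j → j ≤ a → nu j ≤ nu i
  nu_lt_lam : ∀ i : ℕ, 1 ≤ i → i ≤ a → nu i < lam i
  lam_le_b : ∀ i : ℕ, 1 ≤ i → i ≤ a → lam i ≤ b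
  lam_one : lam 1 = b
  nu_a : nu a = 0

namespace SkewShape

variable (σ : SkewShape)

/-- The boxes of `σ` : pairs `[i,j]` with `1 ≤ i ≤ a` and `ν i < j ≤ λ i`.
The poset `P_σ` is the set of boxes ordered componentwise:
`[i,j] ≤ [k,l]` iff `i ≤ k` and `j ≤ l` (the product order on `ℕ × ℕ`). -/
def cells : Finset (ℕ × ℕ) :=
  (Finset.Icc 1 σ.a ×ˢ Finset.Icc 1 σ.b).filter
    (fun c => σ.nu c.1 < c.2 ∧ c.2 ≤ σ.lam c.1)

/-- The poset `P_σ` of boxes of `σ` is connected: it is nonempty, and any two boxes are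
joined by a walk along comparable pairs of boxes. -/
def Connected : Prop :=
  σ.cells.Nonempty ∧ ∀ p ∈ σ.cells, ∀ q ∈ σ.cells,
    Relation.ReflTransGen
      (fun x y : ℕ × ℕ => x ∈ σ.cells ∧ y ∈ σ.cells ∧ (x ≤ y ∨ y ≤ x)) p q

/-- `I` is an order ideal of `P_σ`, i.e. a subshape of `σ`. -/
def IsIdeal (I : Finset (ℕ × ℕ)) : Prop :=
  I ⊆ σ.cells ∧ ∀ p ∈ I, ∀ q ∈ σ.cells, q ≤ p → q ∈ I

/-- The set `J(σ)` of all order ideals of `P_σ` (equivalently, subshapes of `σ`). -/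
def idealsFinset : Finset (Finset (ℕ × ℕ)) :=
  σ.cells.powerset.filter fun I => σ.IsIdeal I

/-- Box `p` can be toggled in to the order ideal `I`. -/
def CanToggleIn (I : Finset (ℕ × ℕ)) (p : ℕ × ℕ) : Prop :=
  p ∈ σ.cells ∧ p ∉ I ∧ σ.IsIdeal (insert p I)

/-- Box `p` can be toggled out of the order ideal `I`. -/
def CanToggleOut (I : Finset (ℕ × ℕ)) (p : ℕ × ℕ) : Prop :=
  p ∈ I ∧ σ.IsIdeal (I.erase p)

/-- The jaggedness of `I`: the number of boxes that can be toggled in,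
plus the number of boxes that can be toggled out. -/
def jag (I : Finset (ℕ × ℕ)) : ℕ :=
  (σ.cells.filter fun p => σ.CanToggleIn I p).card +
  (σ.cells.filter fun p => σ.CanToggleOut I p).card

/-- The probability, under `μ`, that a random order ideal of `P_σ` satisfies `E`. -/
def pr (μ : Finset (ℕ × ℕ) → ℝ) (E : Finset (ℕ × ℕ) → Prop) : ℝ :=
  ∑ I ∈ σ.idealsFinset.filter E, μ I

/-- `μ` is a probability distribution on `J(σ)`. -/
def IsProbDist (μ : Finset (ℕ × ℕ) → ℝ) : Prop :=
  (∀ I, 0 ≤ μ I) ∧ (∑ I ∈ σ.idealsFinset, μ I = 1)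

/-- `μ` is toggle-symmetric: for every box `p` of `σ`, the probability that `p` can be
toggled in equals the probability that `p` can be toggled out. -/
def ToggleSymmetric (μ : Finset (ℕ × ℕ) → ℝ) : Prop :=
  ∀ p ∈ σ.cells,
    σ.pr μ (fun I => σ.CanToggleIn I p) = σ.pr μ (fun I => σ.CanToggleOut I p)

/-- The expectation of the statistic `f` with respect to `μ`. -/
def expect (μ : Finset (ℕ × ℕ) → ℝ) (f : Finset (ℕ × ℕ) → ℝ) : ℝ :=
  ∑ I ∈ σ.idealsFinset, μ I * f I

/-- `c` is a northwest outward corner of `σ`, occurring at the lattice point `c = (i,j)`: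
the northwest boundary of `σ` turns at `(i,j)` with its two steps
(the top edge of box `[i+1,j]` and the left edge of box `[i,j+1]`)
not bordering a common box of `σ`. -/
def IsNWCorner (c : ℕ × ℕ) : Prop :=
  (c.1 + 1, c.2) ∈ σ.cells ∧ (c.1, c.2 + 1) ∈ σ.cells ∧ (c.1, c.2) ∉ σ.cells

/-- `c` is a southeast outward corner of `σ`, occurring at the lattice point `c = (i,j)`:
the southeast boundary of `σ` turns at `(i,j)` with its two steps
(the right edge of box `[i+1,j]` and the bottom edge of box `[i,j+1]`)
not bordering a common box of `σ`. -/
def IsSECorner (c : ℕ × ℕ) : Prop :=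
  (c.1 + 1, c.2) ∈ σ.cells ∧ (c.1, c.2 + 1) ∈ σ.cells ∧ (c.1 + 1, c.2 + 1) ∉ σ.cells

/-- The set of northwest outward corners of `σ`. -/
def nwCorners : Finset (ℕ × ℕ) :=
  (Finset.range (σ.a + 1) ×ˢ Finset.range (σ.b + 1)).filter fun c => σ.IsNWCorner c

/-- The set of southeast outward corners of `σ`.
(Together, `nwCorners` and `seCorners` form the set `C(σ)` of outward corners.) -/
def seCorners : Finset (ℕ × ℕ) :=
  (Finset.range (σ.a + 1) ×ˢ Finset.range (σ.b + 1)).filter fun c => σ.IsSECorner c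

/-- The displacement `δ(c) = 1 − i/a − j/b` of a northwest corner occurring at `(i,j)`. -/
def nwDisp (c : ℕ × ℕ) : ℝ := 1 - (c.1 : ℝ) / (σ.a : ℝ) - (c.2 : ℝ) / (σ.b : ℝ)

/-- The displacement `δ(c) = −1 + i/a + j/b` of a southeast corner occurring at `(i,j)`. -/
def seDisp (c : ℕ × ℕ) : ℝ := -1 + (c.1 : ℝ) / (σ.a : ℝ) + (c.2 : ℝ) / (σ.b : ℝ)

/-- The lattice path of the subshape `I` includes both steps of the northwest corner at
`c = (i,j)`: neither box `[i+1,j]` nor box `[i,j+1]` belongs to `I`. -/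
def NWInPath (c : ℕ × ℕ) (I : Finset (ℕ × ℕ)) : Prop :=
  (c.1 + 1, c.2) ∉ I ∧ (c.1, c.2 + 1) ∉ I

/-- The lattice path of the subshape `I` includes both steps of the southeast corner at
`c = (i,j)`: both boxes `[i+1,j]` and `[i,j+1]` belong to `I`. -/
def SEInPath (c : ℕ × ℕ) (I : Finset (ℕ × ℕ)) : Prop :=
  (c.1 + 1, c.2) ∈ I ∧ (c.1, c.2 + 1) ∈ I

/-- The correction term `Σ_{c ∈ C(σ)} δ(c) · P_μ(c)`, where `P_μ(c)` is the
`μ`-probability that the lattice path of a random subshape includes both steps of `c`. -/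
def cornerCorrection (μ : Finset (ℕ × ℕ) → ℝ) : ℝ :=
  (∑ c ∈ σ.nwCorners, σ.nwDisp c * σ.pr μ (NWInPath c)) +
  (∑ c ∈ σ.seCorners, σ.seDisp c * σ.pr μ (SEInPath c))

end SkewShape

namespace SkewShape

variable (σ : SkewShape)

lemma mem_cells {p : ℕ × ℕ} :
    p ∈ σ.cells ↔ 1 ≤ p.1 ∧ p.1 ≤ σ.a ∧ σ.nu p.1 < p.2 ∧ p.2 ≤ σ.lam p.1 := by
  constructor
  · intro h
    simp only [cells, Finset.mem_filter, Finset.mem_product, Finset.mem_Icc] at h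
    exact ⟨h.1.1.1, h.1.1.2, h.2.1, h.2.2⟩
  · rintro ⟨h1, h2, h3, h4⟩
    simp only [cells, Finset.mem_filter, Finset.mem_product, Finset.mem_Icc]
    exact ⟨⟨⟨h1, h2⟩, ⟨by omega, le_trans h4 (σ.lam_le_b _ h1 h2)⟩⟩, h3, h4⟩

lemma mem_idealsFinset {I : Finset (ℕ × ℕ)} :
    I ∈ σ.idealsFinset ↔ σ.IsIdeal I := by
  constructor
  · intro h; exact (Finset.mem_filter.mp h).2
  · intro h; exact Finset.mem_filter.mpr ⟨Finset.mem_powerset.mpr h.1, h⟩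

private lemma ioc_of_down (S : Finset ℕ) (m : ℕ) (hub : ∀ j ∈ S, m < j)
    (hdc : ∀ j ∈ S, ∀ k, m < k → k ≤ j → k ∈ S) :
    S = Finset.Ioc m (m + S.card) := by
  rcases S.eq_empty_or_nonempty with h | h
  · simp [h]
  · obtain ⟨M, hM, hle⟩ : ∃ M ∈ S, ∀ j ∈ S, j ≤ M :=
      ⟨S.max' h, S.max'_mem h, fun j hj => S.le_max' j hj⟩
    have hS : S = Finset.Ioc m M := by
      ext j; simp only [Finset.mem_Ioc]
      constructor
      · exact fun hj => ⟨hub j hj, hle j hj⟩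
      · rintro ⟨h1, h2⟩; exact hdc _ hM j h1 h2
    have hc : S.card = M - m := by rw [hS, Nat.card_Ioc]
    have hub' := hub _ hM
    rw [hc, hS]
    congr 1
    omega

/-- The row profile `ρ_i` of a subshape `I` : the column of the rightmost box of `I`
in row `i` (or `ν i` if row `i` of `I` is empty), with conventions `ρ_0 = b` and
`ρ_i = 0` for `i > a`. -/
def rowProf (I : Finset (ℕ × ℕ)) (i : ℕ) : ℕ :=
  if i = 0 then σ.b else if σ.a < i then 0 else σ.nu i + (I.filter fun p => p.1 = i).card

lemma rowProf_zero (I : Finset (ℕ × ℕ)) : σ.rowProf I 0 = σ.b := by simp [rowProf]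

lemma rowProf_of_gt (I : Finset (ℕ × ℕ)) {i : ℕ} (h : σ.a < i) : σ.rowProf I i = 0 := by
  have h0 : i ≠ 0 := by have := σ.ha; omega
  rw [rowProf, if_neg h0, if_pos h]

lemma mem_cells' {i j : ℕ} :
    (i, j) ∈ σ.cells ↔ 1 ≤ i ∧ i ≤ σ.a ∧ σ.nu i < j ∧ j ≤ σ.lam i := σ.mem_cells

lemma nu_le_rowProf (I : Finset (ℕ × ℕ)) {i : ℕ} (h1 : 1 ≤ i) (h2 : i ≤ σ.a) :
    σ.nu i ≤ σ.rowProf I i := by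
  simp only [rowProf, if_neg (by omega : ¬ i = 0), if_neg (by omega : ¬ σ.a < i)]
  exact Nat.le_add_right _ _

lemma mem_rowProf {I : Finset (ℕ × ℕ)} (hI : σ.IsIdeal I) (i j : ℕ) :
    (i, j) ∈ I ↔ 1 ≤ i ∧ i ≤ σ.a ∧ σ.nu i < j ∧ j ≤ σ.rowProf I i := by
  by_cases hi : 1 ≤ i ∧ i ≤ σ.a
  · obtain ⟨hi1, hi2⟩ := hi
    set S : Finset ℕ := (I.filter fun p => p.1 = i).image Prod.snd with hSdef
    have hcard : S.card = (I.filter fun p => p.1 = i).card := by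
      apply Finset.card_image_of_injOn
      intro p hp q hq hpq
      have hp' := (Finset.mem_filter.mp hp).2
      have hq' := (Finset.mem_filter.mp hq).2
      exact Prod.ext (hp'.trans hq'.symm) hpq
    have hmemS : ∀ k, k ∈ S ↔ (i, k) ∈ I := by
      intro k
      simp only [hSdef, Finset.mem_image, Finset.mem_filter]
      constructor
      · rintro ⟨p, ⟨hpI, hp1⟩, hp2⟩
        have : p = (i, k) := Prod.ext hp1 hp2
        rwa [this] at hpI
      · intro h; exact ⟨(i, k), ⟨h, rfl⟩, rfl⟩
    have hub : ∀ k ∈ S, σ.nu i < k := by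
      intro k hk
      have := (σ.mem_cells.mp (hI.1 ((hmemS k).mp hk))).2.2.1
      exact this
    have hdc : ∀ k ∈ S, ∀ l, σ.nu i < l → l ≤ k → l ∈ S := by
      intro k hk l hl1 hl2
      have hkI := (hmemS k).mp hk
      have hkc := σ.mem_cells.mp (hI.1 hkI)
      have hlc : (i, l) ∈ σ.cells := σ.mem_cells.mpr ⟨hi1, hi2, hl1, le_trans hl2 hkc.2.2.2⟩
      exact (hmemS l).mpr (hI.2 _ hkI _ hlc (Prod.mk_le_mk.mpr ⟨le_refl i, hl2⟩))
    have hS := ioc_of_down S (σ.nu i) hub hdc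
    have hprof : σ.rowProf I i = σ.nu i + S.card := by
      simp only [rowProf, if_neg (by omega : ¬ i = 0), if_neg (by omega : ¬ σ.a < i), hcard]
    constructor
    · intro h
      have hjS : j ∈ S := (hmemS j).mpr h
      rw [hS] at hjS
      simp only [Finset.mem_Ioc] at hjS
      exact ⟨hi1, hi2, hjS.1, by omega⟩
    · rintro ⟨_, _, h3, h4⟩
      rw [← hmemS, hS]
      simp only [Finset.mem_Ioc]
      exact ⟨h3, by omega⟩
  · constructor
    · intro h
      have := σ.mem_cells.mp (hI.1 h)
      exact absurd ⟨this.1, this.2.1⟩ hi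
    · rintro ⟨h1, h2, _, _⟩; exact absurd ⟨h1, h2⟩ hi

lemma rowProf_le_lam {I : Finset (ℕ × ℕ)} (hI : σ.IsIdeal I) {i : ℕ}
    (h1 : 1 ≤ i) (h2 : i ≤ σ.a) : σ.rowProf I i ≤ σ.lam i := by
  by_cases h : σ.rowProf I i ≤ σ.nu i
  · exact le_trans h (le_of_lt (σ.nu_lt_lam i h1 h2))
  · push_neg at h
    have : (i, σ.rowProf I i) ∈ I := (σ.mem_rowProf hI i _).mpr ⟨h1, h2, h, le_refl _⟩
    exact (σ.mem_cells.mp (hI.1 this)).2.2.2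

lemma rowProf_le_b {I : Finset (ℕ × ℕ)} (hI : σ.IsIdeal I) (i : ℕ) :
    σ.rowProf I i ≤ σ.b := by
  rcases Nat.eq_zero_or_pos i with h | h
  · rw [h, rowProf_zero]
  · by_cases h2 : σ.a < i
    · rw [σ.rowProf_of_gt I h2]; exact Nat.zero_le _
    · exact le_trans (σ.rowProf_le_lam hI h (by omega)) (σ.lam_le_b i h (by omega))

lemma rowProf_anti_succ {I : Finset (ℕ × ℕ)} (hI : σ.IsIdeal I) (i : ℕ) :
    σ.rowProf I (i + 1) ≤ σ.rowProf I i := by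
  rcases Nat.eq_zero_or_pos i with h | h
  · rw [h, rowProf_zero]; exact σ.rowProf_le_b hI 1
  · by_cases h2 : σ.a < i + 1
    · rw [σ.rowProf_of_gt I h2]; exact Nat.zero_le _
    · push_neg at h2
      have hi1 : 1 ≤ i := h
      have hia : i ≤ σ.a := by omega
      set r1 := σ.rowProf I (i + 1) with hr1
      by_cases h3 : r1 ≤ σ.nu i
      · exact le_trans h3 (σ.nu_le_rowProf I hi1 hia)
      · push_neg at h3
        have hnu : σ.nu (i+1) < r1 :=
          lt_of_le_of_lt (σ.nu_anti i (i+1) hi1 (by omega) h2) h3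
        have hmem : (i+1, r1) ∈ I :=
          (σ.mem_rowProf hI (i+1) r1).mpr ⟨by omega, h2, hnu, le_refl _⟩
        have hcell : (i, r1) ∈ σ.cells := by
          refine σ.mem_cells.mpr ⟨hi1, hia, h3, ?_⟩
          exact le_trans (σ.rowProf_le_lam hI (by omega) h2)
            (σ.lam_anti i (i+1) hi1 (by omega) h2)
        have := hI.2 _ hmem _ hcell (Prod.mk_le_mk.mpr ⟨by omega, le_refl _⟩)
        exact ((σ.mem_rowProf hI i r1).mp this).2.2.2

lemma rowProf_anti {I : Finset (ℕ × ℕ)} (hI : σ.IsIdeal I) {i j : ℕ} (h : i ≤ j) :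
    σ.rowProf I j ≤ σ.rowProf I i := by
  induction j with
  | zero =>
    have : i = 0 := by omega
    rw [this]
  | succ k ih =>
    rcases Nat.lt_or_ge i (k+1) with h' | h'
    · exact le_trans (σ.rowProf_anti_succ hI k) (ih (by omega))
    · have : i = k + 1 := by omega
      rw [this]

lemma conn_overlap (hconn : σ.Connected) :
    ∀ i, 1 ≤ i → i < σ.a → σ.nu i < σ.lam (i + 1) := by
  intro i hi1 hi2
  by_contra hcon
  push_neg at hcon
  have hp : (i, σ.nu i + 1) ∈ σ.cells :=
    σ.mem_cells'.mpr ⟨hi1, by omega, by omega, σ.nu_lt_lam i hi1 (by omega)⟩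
  have hq : (i+1, σ.nu (i+1) + 1) ∈ σ.cells :=
    σ.mem_cells'.mpr ⟨by omega, by omega, by omega, σ.nu_lt_lam (i+1) (by omega) (by omega)⟩
  have hwalk := hconn.2 _ hp _ hq
  have hstep : ∀ x y : ℕ × ℕ,
      (x ∈ σ.cells ∧ y ∈ σ.cells ∧ (x ≤ y ∨ y ≤ x)) → x.1 ≤ i → y.1 ≤ i := by
    rintro x y ⟨hx, hy, hxy | hyx⟩ hxi
    · by_contra hyi
      push_neg at hyi
      obtain ⟨hx1, hx2, hx3, hx4⟩ := σ.mem_cells.mp hx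
      obtain ⟨hy1, hy2, hy3, hy4⟩ := σ.mem_cells.mp hy
      have h1 : y.2 ≤ σ.lam (i+1) :=
        le_trans hy4 (σ.lam_anti (i+1) y.1 (by omega) hyi hy2)
      have h2 : σ.nu i ≤ σ.nu x.1 := σ.nu_anti x.1 i hx1 hxi (by omega)
      have h3 : x.2 ≤ y.2 := (Prod.le_def.mp hxy).2
      omega
    · exact le_trans (Prod.le_def.mp hyx).1 hxi
  have key : ∀ x y : ℕ × ℕ, Relation.ReflTransGen
      (fun x y : ℕ × ℕ => x ∈ σ.cells ∧ y ∈ σ.cells ∧ (x ≤ y ∨ y ≤ x)) x y →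
      x.1 ≤ i → y.1 ≤ i := by
    intro x y hw
    induction hw with
    | refl => exact id
    | tail hw hs ih => intro hx; exact hstep _ _ hs (ih hx)
  have hfin := key _ _ hwalk (le_refl i)
  exact Nat.not_succ_le_self i hfin

lemma canToggleOut_iff {I : Finset (ℕ × ℕ)} (hI : σ.IsIdeal I) (k j : ℕ) :
    σ.CanToggleOut I (k, j) ↔
      (k, j) ∈ σ.cells ∧ σ.rowProf I k = j ∧ σ.rowProf I (k+1) < j := by
  constructor
  · rintro ⟨hmem, herase⟩
    have hcell := hI.1 hmem
    obtain ⟨hk1, hk2, hnu, hlam⟩ := σ.mem_cells'.mp hcell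
    have hjr : j ≤ σ.rowProf I k := ((σ.mem_rowProf hI k j).mp hmem).2.2.2
    have hrk : σ.rowProf I k = j := by
      by_contra hne
      have hlt : j < σ.rowProf I k := by omega
      have hrmem : (k, σ.rowProf I k) ∈ I :=
        (σ.mem_rowProf hI k _).mpr ⟨hk1, hk2, by omega, le_refl _⟩
      have h1 : (k, σ.rowProf I k) ∈ I.erase (k, j) :=
        Finset.mem_erase.mpr ⟨by intro hc2; rw [Prod.mk.injEq] at hc2; omega, hrmem⟩
      have h2 := herase.2 _ h1 _ hcell (Prod.mk_le_mk.mpr ⟨le_refl _, by omega⟩)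
      exact absurd rfl (Finset.mem_erase.mp h2).1
    refine ⟨hcell, hrk, ?_⟩
    by_cases hka : k = σ.a
    · rw [hka, σ.rowProf_of_gt I (by omega)]; omega
    · by_contra hge
      push_neg at hge
      have hmem2 : (k+1, j) ∈ I := (σ.mem_rowProf hI (k+1) j).mpr
        ⟨by omega, by omega,
          lt_of_le_of_lt (σ.nu_anti k (k+1) hk1 (by omega) (by omega)) hnu, hge⟩
      have h1 : (k+1, j) ∈ I.erase (k, j) :=
        Finset.mem_erase.mpr ⟨by intro hc2; rw [Prod.mk.injEq] at hc2; omega, hmem2⟩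
      have h2 := herase.2 _ h1 _ hcell (Prod.mk_le_mk.mpr ⟨by omega, le_refl _⟩)
      exact absurd rfl (Finset.mem_erase.mp h2).1
  · rintro ⟨hcell, h1, h2⟩
    obtain ⟨hk1, hk2, hnu, hlam⟩ := σ.mem_cells'.mp hcell
    have hmem : (k, j) ∈ I := (σ.mem_rowProf hI k j).mpr ⟨hk1, hk2, hnu, by omega⟩
    refine ⟨hmem, ⟨fun x hx => hI.1 (Finset.mem_of_mem_erase hx), ?_⟩⟩
    intro p hp q hq hle
    have hpI := Finset.mem_of_mem_erase hp
    have hqI := hI.2 p hpI q hq hle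
    refine Finset.mem_erase.mpr ⟨?_, hqI⟩
    rintro rfl
    have hple := Prod.le_def.mp hle
    have hpmem := (σ.mem_rowProf hI p.1 p.2).mp hpI
    have hpne := (Finset.mem_erase.mp hp).1
    rcases Nat.lt_or_ge k p.1 with hlt | hge
    · have hmono : σ.rowProf I p.1 ≤ σ.rowProf I (k+1) := σ.rowProf_anti hI (by omega)
      have := hpmem.2.2.2
      have := hple.2
      omega
    · have hpk : p.1 = k := by have := hple.1; omega
      have hpj : p.2 = j := by
        have h4 := hpmem.2.2.2
        rw [hpk] at h4
        have := hple.2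
        omega
      exact hpne (Prod.ext hpk hpj)

lemma canToggleIn_iff {I : Finset (ℕ × ℕ)} (hI : σ.IsIdeal I) (k j : ℕ) :
    σ.CanToggleIn I (k, j) ↔
      (k, j) ∈ σ.cells ∧ j = σ.rowProf I k + 1 ∧ j ≤ σ.rowProf I (k-1) := by
  constructor
  · rintro ⟨hcell, hnot, hins⟩
    obtain ⟨hk1, hk2, hnu, hlam⟩ := σ.mem_cells'.mp hcell
    have hgt : σ.rowProf I k < j := by
      by_contra hle
      exact hnot ((σ.mem_rowProf hI k j).mpr ⟨hk1, hk2, hnu, by omega⟩)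
    have hle1 : j ≤ σ.rowProf I k + 1 := by
      by_contra hgt2
      push_neg at hgt2
      have hnuk : σ.nu k ≤ σ.rowProf I k := σ.nu_le_rowProf I hk1 hk2
      have hcell2 : (k, j-1) ∈ σ.cells := σ.mem_cells'.mpr ⟨hk1, hk2, by omega, by omega⟩
      have h2 := hins.2 _ (Finset.mem_insert_self _ _) _ hcell2
        (Prod.mk_le_mk.mpr ⟨le_refl _, by omega⟩)
      rcases Finset.mem_insert.mp h2 with heq | hmem
      · have := (Prod.mk.injEq _ _ _ _).mp heq
        omega
      · have := ((σ.mem_rowProf hI k (j-1)).mp hmem).2.2.2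
        omega
    refine ⟨hcell, by omega, ?_⟩
    by_cases hk1' : k = 1
    · subst hk1'
      have hb : σ.rowProf I 0 = σ.b := σ.rowProf_zero I
      have hlb := σ.lam_le_b 1 le_rfl σ.ha
      simpa [hb] using (by omega : j ≤ σ.b)
    · have hk2' : 2 ≤ k := by omega
      by_cases hnu' : σ.nu (k-1) < j
      · have hcell2 : (k-1, j) ∈ σ.cells := σ.mem_cells'.mpr
          ⟨by omega, by omega, hnu',
            le_trans hlam (σ.lam_anti (k-1) k (by omega) (by omega) hk2)⟩
        have h2 := hins.2 _ (Finset.mem_insert_self _ _) _ hcell2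
          (Prod.mk_le_mk.mpr ⟨by omega, le_refl _⟩)
        rcases Finset.mem_insert.mp h2 with heq | hmem
        · have := (Prod.mk.injEq _ _ _ _).mp heq
          omega
        · exact ((σ.mem_rowProf hI (k-1) j).mp hmem).2.2.2
      · exact le_trans (by omega) (σ.nu_le_rowProf I (by omega : 1 ≤ k-1) (by omega))
  · rintro ⟨hcell, h1, h2⟩
    obtain ⟨hk1, hk2, hnu, hlam⟩ := σ.mem_cells'.mp hcell
    have hnot : (k, j) ∉ I := fun hmem => by
      have := ((σ.mem_rowProf hI k j).mp hmem).2.2.2; omega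
    refine ⟨hcell, hnot, Finset.insert_subset hcell hI.1, ?_⟩
    intro p hp q hq hle
    rcases Finset.mem_insert.mp hp with rfl | hpI
    · by_cases hqe : q = (k, j)
      · rw [hqe]; exact Finset.mem_insert_self _ _
      · refine Finset.mem_insert_of_mem ?_
        obtain ⟨hq1, hq2, hq3, hq4⟩ := σ.mem_cells.mp hq
        have hle' := Prod.le_def.mp hle
        refine (σ.mem_rowProf hI q.1 q.2).mpr ⟨hq1, hq2, hq3, ?_⟩
        rcases Nat.lt_or_ge q.1 k with hlt | hge
        · have hmono : σ.rowProf I (k-1) ≤ σ.rowProf I q.1 := σ.rowProf_anti hI (by omega)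
          have := hle'.2
          omega
        · have hqk : q.1 = k := by have := hle'.1; omega
          have hqj : q.2 ≠ j := fun h => hqe (Prod.ext hqk h)
          have := hle'.2
          rw [hqk]
          omega
    · exact Finset.mem_insert_of_mem (hI.2 p hpI q hq hle)

lemma isNWCorner_elim {c : ℕ × ℕ} (hc : σ.IsNWCorner c) :
    1 ≤ c.1 ∧ c.1 + 1 ≤ σ.a ∧ σ.nu c.1 = c.2 ∧ 1 ≤ c.2 ∧ c.2 + 1 ≤ σ.lam c.1 ∧
      σ.nu (c.1+1) < c.2 ∧ c.2 ≤ σ.lam (c.1+1) := by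
  obtain ⟨h1, h2, h3⟩ := hc
  obtain ⟨h11, h12, h13, h14⟩ := σ.mem_cells'.mp h1
  obtain ⟨h21, h22, h23, h24⟩ := σ.mem_cells'.mp h2
  have hnu : ¬ (σ.nu c.1 < c.2) := fun hlt =>
    h3 (σ.mem_cells'.mpr ⟨h21, h22, hlt, by omega⟩)
  exact ⟨h21, h12, by omega, by omega, h24, h13, h14⟩

lemma isSECorner_elim {c : ℕ × ℕ} (hc : σ.IsSECorner c) :
    1 ≤ c.1 ∧ c.1 + 1 ≤ σ.a ∧ σ.lam (c.1+1) = c.2 ∧ 1 ≤ c.2 ∧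
      σ.nu (c.1+1) < c.2 ∧ σ.nu c.1 < c.2 + 1 ∧ c.2 + 1 ≤ σ.lam c.1 := by
  obtain ⟨h1, h2, h3⟩ := hc
  obtain ⟨h11, h12, h13, h14⟩ := σ.mem_cells'.mp h1
  obtain ⟨h21, h22, h23, h24⟩ := σ.mem_cells'.mp h2
  have hlam : ¬ (c.2 + 1 ≤ σ.lam (c.1+1)) := fun hle =>
    h3 (σ.mem_cells'.mpr ⟨by omega, h12, by omega, hle⟩)
  exact ⟨h21, h12, by omega, by omega, h13, h23, h24⟩

lemma nwInPath_iff {I : Finset (ℕ × ℕ)} (hI : σ.IsIdeal I) {c : ℕ × ℕ}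
    (hc : σ.IsNWCorner c) :
    NWInPath c I ↔ σ.rowProf I c.1 = c.2 ∧ σ.rowProf I (c.1+1) < c.2 := by
  obtain ⟨e1, e2, e3, e4, e5, e6, e7⟩ := σ.isNWCorner_elim hc
  have hnule : σ.nu c.1 ≤ σ.rowProf I c.1 := σ.nu_le_rowProf I e1 (by omega)
  unfold NWInPath
  rw [σ.mem_rowProf hI, σ.mem_rowProf hI]
  omega

lemma seInPath_iff {I : Finset (ℕ × ℕ)} (hI : σ.IsIdeal I) {c : ℕ × ℕ}
    (hc : σ.IsSECorner c) :
    SEInPath c I ↔ σ.rowProf I (c.1+1) = c.2 ∧ c.2 < σ.rowProf I c.1 := by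
  obtain ⟨e1, e2, e3, e4, e5, e6, e7⟩ := σ.isSECorner_elim hc
  have hlamle : σ.rowProf I (c.1+1) ≤ σ.lam (c.1+1) := σ.rowProf_le_lam hI (by omega) e2
  unfold SEInPath
  rw [σ.mem_rowProf hI, σ.mem_rowProf hI]
  omega

lemma ENat_cases {I : Finset (ℕ × ℕ)} (hI : σ.IsIdeal I) (hconn : σ.Connected)
    {i j : ℕ} (hi1 : 1 ≤ i) (hi2 : i ≤ σ.a)
    (h1 : σ.rowProf I i = j) (h2 : σ.rowProf I (i+1) < j) :
    (i, j) ∈ σ.cells ∨ σ.IsNWCorner (i, j) := by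
  by_cases hnu : σ.nu i < j
  · exact Or.inl (σ.mem_cells'.mpr ⟨hi1, hi2, hnu, h1 ▸ σ.rowProf_le_lam hI hi1 hi2⟩)
  · right
    have hnule : σ.nu i ≤ σ.rowProf I i := σ.nu_le_rowProf I hi1 hi2
    have hj : σ.nu i = j := by omega
    have hia : i < σ.a := by
      rcases Nat.eq_or_lt_of_le hi2 with he | hl
      · exfalso
        rw [he] at hj
        have := σ.nu_a
        omega
      · exact hl
    show (i+1, j) ∈ σ.cells ∧ (i, j+1) ∈ σ.cells ∧ (i, j) ∉ σ.cells
    refine ⟨?_, ?_, ?_⟩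
    · have hnn : σ.nu (i+1) ≤ σ.rowProf I (i+1) := σ.nu_le_rowProf I (by omega) (by omega)
      have hcn := σ.conn_overlap hconn i hi1 hia
      exact σ.mem_cells'.mpr ⟨by omega, by omega, by omega, by omega⟩
    · have := σ.nu_lt_lam i hi1 hi2
      exact σ.mem_cells'.mpr ⟨hi1, hi2, by omega, by omega⟩
    · intro hmem
      have := (σ.mem_cells'.mp hmem).2.2.1
      omega

lemma NEat_cases {I : Finset (ℕ × ℕ)} (hI : σ.IsIdeal I) (hconn : σ.Connected)
    {i j : ℕ} (hia : i + 1 ≤ σ.a)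
    (h1 : σ.rowProf I (i+1) = j) (h2 : j < σ.rowProf I i) :
    (i+1, j+1) ∈ σ.cells ∨ σ.IsSECorner (i, j) := by
  have hnule : σ.nu (i+1) ≤ σ.rowProf I (i+1) := σ.nu_le_rowProf I (by omega) hia
  by_cases hlam : j + 1 ≤ σ.lam (i+1)
  · exact Or.inl (σ.mem_cells'.mpr ⟨by omega, hia, by omega, hlam⟩)
  · right
    have hlamle : σ.rowProf I (i+1) ≤ σ.lam (i+1) := σ.rowProf_le_lam hI (by omega) hia
    have hj : σ.lam (i+1) = j := by omega
    have hi1 : 1 ≤ i := by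
      by_contra h0
      have hi0 : i = 0 := by omega
      subst hi0
      have hb := σ.rowProf_zero I
      have hl1 := σ.lam_one
      have hj' : σ.lam 1 = j := by simpa using hj
      have := σ.rowProf_le_b hI 0
      omega
    show (i+1, j) ∈ σ.cells ∧ (i, j+1) ∈ σ.cells ∧ (i+1, j+1) ∉ σ.cells
    refine ⟨?_, ?_, ?_⟩
    · have := σ.nu_lt_lam (i+1) (by omega) hia
      exact σ.mem_cells'.mpr ⟨by omega, hia, by omega, by omega⟩
    · have hconn' := σ.conn_overlap hconn i hi1 (by omega)
      have hle : σ.rowProf I i ≤ σ.lam i := σ.rowProf_le_lam hI hi1 (by omega)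
      exact σ.mem_cells'.mpr ⟨hi1, by omega, by omega, by omega⟩
    · intro hmem
      have := (σ.mem_cells'.mp hmem).2.2.2
      omega

lemma ENat_unique {I : Finset (ℕ × ℕ)} (hI : σ.IsIdeal I) {i i' l : ℕ}
    (h1 : σ.rowProf I i = l) (h2 : σ.rowProf I (i+1) < l)
    (h1' : σ.rowProf I i' = l) (h2' : σ.rowProf I (i'+1) < l) : i = i' := by
  by_contra hne
  rcases Nat.lt_or_ge i i' with hlt | hge
  · have := σ.rowProf_anti hI (show i+1 ≤ i' by omega); omega
  · have := σ.rowProf_anti hI (show i'+1 ≤ i by omega); omega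

lemma NEat_unique {I : Finset (ℕ × ℕ)} (hI : σ.IsIdeal I) {i i' l : ℕ}
    (h1 : σ.rowProf I (i+1) = l) (h2 : l < σ.rowProf I i)
    (h1' : σ.rowProf I (i'+1) = l) (h2' : l < σ.rowProf I i') : i = i' := by
  by_contra hne
  rcases Nat.lt_or_ge i i' with hlt | hge
  · have := σ.rowProf_anti hI (show i+1 ≤ i' by omega); omega
  · have := σ.rowProf_anti hI (show i'+1 ≤ i by omega); omega

lemma rowOut_count {I : Finset (ℕ × ℕ)} (hI : σ.IsIdeal I) (hconn : σ.Connected)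
    {k : ℕ} (hk1 : 1 ≤ k) (hk2 : k ≤ σ.a) :
    ((Finset.Icc 1 σ.b).filter (fun j => σ.CanToggleOut I (k, j))).card
      + (σ.nwCorners.filter (fun c => c.1 = k ∧ NWInPath c I)).card
    = if σ.rowProf I (k+1) < σ.rowProf I k then 1 else 0 := by
  by_cases hD : σ.rowProf I (k+1) < σ.rowProf I k
  · rw [if_pos hD]
    rcases σ.ENat_cases hI hconn hk1 hk2 rfl hD with hcell | hcorner
    · have hfilter1 : (Finset.Icc 1 σ.b).filter (fun j => σ.CanToggleOut I (k, j))
          = {σ.rowProf I k} := by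
        ext j
        simp only [Finset.mem_filter, Finset.mem_Icc, Finset.mem_singleton]
        constructor
        · rintro ⟨-, hout⟩
          exact ((σ.canToggleOut_iff hI k j).mp hout).2.1.symm
        · rintro rfl
          have h2 := σ.rowProf_le_b hI k
          exact ⟨⟨by omega, h2⟩, (σ.canToggleOut_iff hI k _).mpr ⟨hcell, rfl, hD⟩⟩
      have hfilter2 : σ.nwCorners.filter (fun c => c.1 = k ∧ NWInPath c I) = ∅ := by
        refine Finset.filter_false_of_mem ?_
        rintro c hc ⟨hck, hpath⟩
        have hcorn := (Finset.mem_filter.mp hc).2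
        have hp := (σ.nwInPath_iff hI hcorn).mp hpath
        have hc2 : c.2 = σ.rowProf I k := by rw [hck] at hp; omega
        apply hcorn.2.2
        have he : (c.1, c.2) = (k, σ.rowProf I k) := Prod.ext hck hc2
        rw [he]
        exact hcell
      rw [hfilter1, hfilter2]
      simp
    · have hnotcell := hcorner.2.2
      have hfilter1 : (Finset.Icc 1 σ.b).filter (fun j => σ.CanToggleOut I (k, j)) = ∅ := by
        refine Finset.filter_false_of_mem ?_
        intro j hj hout
        have h := (σ.canToggleOut_iff hI k j).mp hout
        have hje : j = σ.rowProf I k := h.2.1.symm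
        subst hje
        exact hnotcell h.1
      have hfilter2 : σ.nwCorners.filter (fun c => c.1 = k ∧ NWInPath c I)
          = {(k, σ.rowProf I k)} := by
        ext c
        simp only [Finset.mem_filter, Finset.mem_singleton]
        constructor
        · rintro ⟨hc, hck, hpath⟩
          have hcorn := (Finset.mem_filter.mp hc).2
          have hp := (σ.nwInPath_iff hI hcorn).mp hpath
          refine Prod.ext hck ?_
          rw [← hp.1, hck]
        · rintro rfl
          refine ⟨Finset.mem_filter.mpr ⟨?_, hcorner⟩, rfl,
            (σ.nwInPath_iff hI hcorner).mpr ⟨rfl, hD⟩⟩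
          simp only [Finset.mem_product, Finset.mem_range]
          exact ⟨by omega, by have := σ.rowProf_le_b hI k; omega⟩
      rw [hfilter1, hfilter2]
      simp
  · rw [if_neg hD]
    have hfilter1 : (Finset.Icc 1 σ.b).filter (fun j => σ.CanToggleOut I (k, j)) = ∅ := by
      refine Finset.filter_false_of_mem ?_
      intro j hj hout
      have h := (σ.canToggleOut_iff hI k j).mp hout
      have := h.2.1
      have := h.2.2
      omega
    have hfilter2 : σ.nwCorners.filter (fun c => c.1 = k ∧ NWInPath c I) = ∅ := by
      refine Finset.filter_false_of_mem ?_
      rintro c hc ⟨hck, hpath⟩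
      have hcorn := (Finset.mem_filter.mp hc).2
      have hp := (σ.nwInPath_iff hI hcorn).mp hpath
      rw [hck] at hp
      omega
    rw [hfilter1, hfilter2]
    simp

lemma rowIn_count {I : Finset (ℕ × ℕ)} (hI : σ.IsIdeal I) (hconn : σ.Connected)
    {i : ℕ} (hi : i < σ.a) :
    ((Finset.Icc 1 σ.b).filter (fun j => σ.CanToggleIn I (i+1, j))).card
      + (σ.seCorners.filter (fun c => c.1 = i ∧ SEInPath c I)).card
    = if σ.rowProf I (i+1) < σ.rowProf I i then 1 else 0 := by
  by_cases hD : σ.rowProf I (i+1) < σ.rowProf I i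
  · rw [if_pos hD]
    rcases σ.NEat_cases hI hconn (by omega) rfl hD with hcell | hcorner
    · have hfilter1 : (Finset.Icc 1 σ.b).filter (fun j => σ.CanToggleIn I (i+1, j))
          = {σ.rowProf I (i+1) + 1} := by
        ext j
        simp only [Finset.mem_filter, Finset.mem_Icc, Finset.mem_singleton]
        constructor
        · rintro ⟨-, hin⟩
          have h := (σ.canToggleIn_iff hI (i+1) j).mp hin
          omega
        · rintro rfl
          have hjb := (σ.mem_cells'.mp hcell).2.2.2
          have hlb := σ.lam_le_b (i+1) (by omega) (by omega)
          refine ⟨⟨by omega, by omega⟩,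
            (σ.canToggleIn_iff hI (i+1) _).mpr ⟨hcell, rfl, ?_⟩⟩
          simp only [Nat.add_sub_cancel]
          omega
      have hfilter2 : σ.seCorners.filter (fun c => c.1 = i ∧ SEInPath c I) = ∅ := by
        refine Finset.filter_false_of_mem ?_
        rintro c hc ⟨hck, hpath⟩
        have hcorn := (Finset.mem_filter.mp hc).2
        have hp := (σ.seInPath_iff hI hcorn).mp hpath
        rw [hck] at hp
        have hc2 : c.2 = σ.rowProf I (i+1) := by omega
        apply hcorn.2.2
        have he : (c.1+1, c.2+1) = (i+1, σ.rowProf I (i+1) + 1) := by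
          rw [Prod.mk.injEq]; omega
        rw [he]
        exact hcell
      rw [hfilter1, hfilter2]
      simp
    · have hnotcell := hcorner.2.2
      have hfilter1 : (Finset.Icc 1 σ.b).filter (fun j => σ.CanToggleIn I (i+1, j)) = ∅ := by
        refine Finset.filter_false_of_mem ?_
        intro j hj hin
        have h := (σ.canToggleIn_iff hI (i+1) j).mp hin
        have hje : j = σ.rowProf I (i+1) + 1 := h.2.1
        subst hje
        exact hnotcell h.1
      have hfilter2 : σ.seCorners.filter (fun c => c.1 = i ∧ SEInPath c I)
          = {(i, σ.rowProf I (i+1))} := by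
        ext c
        simp only [Finset.mem_filter, Finset.mem_singleton]
        constructor
        · rintro ⟨hc, hck, hpath⟩
          have hcorn := (Finset.mem_filter.mp hc).2
          have hp := (σ.seInPath_iff hI hcorn).mp hpath
          rw [hck] at hp
          exact Prod.ext hck (by omega)
        · rintro rfl
          refine ⟨Finset.mem_filter.mpr ⟨?_, hcorner⟩, rfl,
            (σ.seInPath_iff hI hcorner).mpr ⟨rfl, hD⟩⟩
          simp only [Finset.mem_product, Finset.mem_range]
          exact ⟨by omega, by have := σ.rowProf_le_b hI (i+1); omega⟩
      rw [hfilter1, hfilter2]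
      simp
  · rw [if_neg hD]
    have hfilter1 : (Finset.Icc 1 σ.b).filter (fun j => σ.CanToggleIn I (i+1, j)) = ∅ := by
      refine Finset.filter_false_of_mem ?_
      intro j hj hin
      have h := (σ.canToggleIn_iff hI (i+1) j).mp hin
      have h1 := h.2.1
      have h2 := h.2.2
      simp only [Nat.add_sub_cancel] at h2
      omega
    have hfilter2 : σ.seCorners.filter (fun c => c.1 = i ∧ SEInPath c I) = ∅ := by
      refine Finset.filter_false_of_mem ?_
      rintro c hc ⟨hck, hpath⟩
      have hcorn := (Finset.mem_filter.mp hc).2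
      have hp := (σ.seInPath_iff hI hcorn).mp hpath
      rw [hck] at hp
      omega
    rw [hfilter1, hfilter2]
    simp

lemma colOut_count {I : Finset (ℕ × ℕ)} (hI : σ.IsIdeal I) (hconn : σ.Connected)
    {m : ℕ} (hm : m < σ.b) :
    ((Finset.Icc 1 σ.a).filter (fun k => σ.CanToggleOut I (k, m+1))).card
      + (σ.nwCorners.filter (fun c => c.2 = m+1 ∧ NWInPath c I)).card
    = if (∃ k, 1 ≤ k ∧ k ≤ σ.a ∧ σ.rowProf I k = m+1 ∧ σ.rowProf I (k+1) < m+1)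
        then 1 else 0 := by
  by_cases hE : ∃ k, 1 ≤ k ∧ k ≤ σ.a ∧ σ.rowProf I k = m+1 ∧ σ.rowProf I (k+1) < m+1
  · rw [if_pos hE]
    obtain ⟨k0, hk01, hk02, hk03, hk04⟩ := hE
    rcases σ.ENat_cases hI hconn hk01 hk02 hk03 hk04 with hcell | hcorner
    · have hfilter1 : (Finset.Icc 1 σ.a).filter (fun k => σ.CanToggleOut I (k, m+1))
          = {k0} := by
        ext k
        simp only [Finset.mem_filter, Finset.mem_Icc, Finset.mem_singleton]
        constructor
        · rintro ⟨-, hout⟩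
          have h := (σ.canToggleOut_iff hI k (m+1)).mp hout
          exact σ.ENat_unique hI h.2.1 h.2.2 hk03 hk04
        · rintro rfl
          exact ⟨⟨hk01, hk02⟩, (σ.canToggleOut_iff hI _ _).mpr ⟨hcell, hk03, hk04⟩⟩
      have hfilter2 : σ.nwCorners.filter (fun c => c.2 = m+1 ∧ NWInPath c I) = ∅ := by
        refine Finset.filter_false_of_mem ?_
        rintro c hc ⟨hck, hpath⟩
        have hcorn := (Finset.mem_filter.mp hc).2
        have hp := (σ.nwInPath_iff hI hcorn).mp hpath
        rw [hck] at hp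
        have hc1 : c.1 = k0 := σ.ENat_unique hI hp.1 hp.2 hk03 hk04
        apply hcorn.2.2
        have he : (c.1, c.2) = (k0, m+1) := Prod.ext hc1 hck
        rw [he]
        exact hcell
      rw [hfilter1, hfilter2]
      simp
    · have hnotcell := hcorner.2.2
      have hfilter1 : (Finset.Icc 1 σ.a).filter (fun k => σ.CanToggleOut I (k, m+1)) = ∅ := by
        refine Finset.filter_false_of_mem ?_
        intro k hk hout
        have h := (σ.canToggleOut_iff hI k (m+1)).mp hout
        have hke : k = k0 := σ.ENat_unique hI h.2.1 h.2.2 hk03 hk04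
        subst hke
        exact hnotcell h.1
      have hfilter2 : σ.nwCorners.filter (fun c => c.2 = m+1 ∧ NWInPath c I)
          = {(k0, m+1)} := by
        ext c
        simp only [Finset.mem_filter, Finset.mem_singleton]
        constructor
        · rintro ⟨hc, hck, hpath⟩
          have hcorn := (Finset.mem_filter.mp hc).2
          have hp := (σ.nwInPath_iff hI hcorn).mp hpath
          rw [hck] at hp
          exact Prod.ext (σ.ENat_unique hI hp.1 hp.2 hk03 hk04) hck
        · rintro rfl
          refine ⟨Finset.mem_filter.mpr ⟨?_, hcorner⟩, rfl,
            (σ.nwInPath_iff hI hcorner).mpr ⟨hk03, hk04⟩⟩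
          simp only [Finset.mem_product, Finset.mem_range]
          exact ⟨by omega, by omega⟩
      rw [hfilter1, hfilter2]
      simp
  · rw [if_neg hE]
    have hfilter1 : (Finset.Icc 1 σ.a).filter (fun k => σ.CanToggleOut I (k, m+1)) = ∅ := by
      refine Finset.filter_false_of_mem ?_
      intro k hk hout
      rw [Finset.mem_Icc] at hk
      have h := (σ.canToggleOut_iff hI k (m+1)).mp hout
      exact hE ⟨k, hk.1, hk.2, h.2.1, h.2.2⟩
    have hfilter2 : σ.nwCorners.filter (fun c => c.2 = m+1 ∧ NWInPath c I) = ∅ := by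
      refine Finset.filter_false_of_mem ?_
      rintro c hc ⟨hck, hpath⟩
      have hcorn := (Finset.mem_filter.mp hc).2
      have he := σ.isNWCorner_elim hcorn
      have hp := (σ.nwInPath_iff hI hcorn).mp hpath
      rw [hck] at hp
      exact hE ⟨c.1, by omega, by omega, hp.1, hp.2⟩
    rw [hfilter1, hfilter2]
    simp

lemma colIn_count {I : Finset (ℕ × ℕ)} (hI : σ.IsIdeal I) (hconn : σ.Connected)
    {m : ℕ} (hm : m < σ.b) :
    ((Finset.Icc 1 σ.a).filter (fun k => σ.CanToggleIn I (k, m+1))).card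
      + (σ.seCorners.filter (fun c => c.2 = m ∧ SEInPath c I)).card
    = if (∃ i, i + 1 ≤ σ.a ∧ σ.rowProf I (i+1) = m ∧ m < σ.rowProf I i)
        then 1 else 0 := by
  by_cases hE : ∃ i, i + 1 ≤ σ.a ∧ σ.rowProf I (i+1) = m ∧ m < σ.rowProf I i
  · rw [if_pos hE]
    obtain ⟨i0, hi01, hi02, hi03⟩ := hE
    rcases σ.NEat_cases hI hconn hi01 hi02 hi03 with hcell | hcorner
    · have hfilter1 : (Finset.Icc 1 σ.a).filter (fun k => σ.CanToggleIn I (k, m+1))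
          = {i0 + 1} := by
        ext k
        simp only [Finset.mem_filter, Finset.mem_Icc, Finset.mem_singleton]
        constructor
        · rintro ⟨hkIcc, hin⟩
          have h := (σ.canToggleIn_iff hI k (m+1)).mp hin
          have hk1 : 1 ≤ k := hkIcc.1
          have he1 : k - 1 + 1 = k := by omega
          have h1' : σ.rowProf I (k-1+1) = m := by rw [he1]; omega
          have h2' : m < σ.rowProf I (k-1) := by
            have := h.2.2
            omega
          have := σ.NEat_unique hI h1' h2' hi02 hi03
          omega
        · rintro rfl
          refine ⟨⟨by omega, by omega⟩, (σ.canToggleIn_iff hI (i0+1) (m+1)).mpr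
            ⟨hcell, by omega, ?_⟩⟩
          simp only [Nat.add_sub_cancel]
          omega
      have hfilter2 : σ.seCorners.filter (fun c => c.2 = m ∧ SEInPath c I) = ∅ := by
        refine Finset.filter_false_of_mem ?_
        rintro c hc ⟨hck, hpath⟩
        have hcorn := (Finset.mem_filter.mp hc).2
        have hp := (σ.seInPath_iff hI hcorn).mp hpath
        rw [hck] at hp
        have hc1 : c.1 = i0 := σ.NEat_unique hI hp.1 hp.2 hi02 hi03
        apply hcorn.2.2
        have he : (c.1+1, c.2+1) = (i0+1, m+1) := by rw [Prod.mk.injEq]; omega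
        rw [he]
        exact hcell
      rw [hfilter1, hfilter2]
      simp
    · have hnotcell := hcorner.2.2
      have hfilter1 : (Finset.Icc 1 σ.a).filter (fun k => σ.CanToggleIn I (k, m+1)) = ∅ := by
        refine Finset.filter_false_of_mem ?_
        intro k hk hin
        rw [Finset.mem_Icc] at hk
        have h := (σ.canToggleIn_iff hI k (m+1)).mp hin
        have hk1 : 1 ≤ k := hk.1
        have he1 : k - 1 + 1 = k := by omega
        have h1' : σ.rowProf I (k-1+1) = m := by rw [he1]; omega
        have h2' : m < σ.rowProf I (k-1) := by
          have := h.2.2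
          omega
        have hke : k - 1 = i0 := σ.NEat_unique hI h1' h2' hi02 hi03
        apply hnotcell
        have he : ((i0:ℕ)+1, m+1) = (k, m+1) := by rw [Prod.mk.injEq]; omega
        rw [he]
        exact h.1
      have hfilter2 : σ.seCorners.filter (fun c => c.2 = m ∧ SEInPath c I)
          = {(i0, m)} := by
        ext c
        simp only [Finset.mem_filter, Finset.mem_singleton]
        constructor
        · rintro ⟨hc, hck, hpath⟩
          have hcorn := (Finset.mem_filter.mp hc).2
          have hp := (σ.seInPath_iff hI hcorn).mp hpath
          rw [hck] at hp
          exact Prod.ext (σ.NEat_unique hI hp.1 hp.2 hi02 hi03) hck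
        · rintro rfl
          refine ⟨Finset.mem_filter.mpr ⟨?_, hcorner⟩, rfl,
            (σ.seInPath_iff hI hcorner).mpr ⟨hi02, hi03⟩⟩
          simp only [Finset.mem_product, Finset.mem_range]
          exact ⟨by omega, by omega⟩
      rw [hfilter1, hfilter2]
      simp
  · rw [if_neg hE]
    have hfilter1 : (Finset.Icc 1 σ.a).filter (fun k => σ.CanToggleIn I (k, m+1)) = ∅ := by
      refine Finset.filter_false_of_mem ?_
      intro k hk hin
      rw [Finset.mem_Icc] at hk
      have h := (σ.canToggleIn_iff hI k (m+1)).mp hin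
      have hk1 : 1 ≤ k := hk.1
      have he1 : k - 1 + 1 = k := by omega
      refine hE ⟨k - 1, by omega, by rw [he1]; omega, ?_⟩
      have := h.2.2
      omega
    have hfilter2 : σ.seCorners.filter (fun c => c.2 = m ∧ SEInPath c I) = ∅ := by
      refine Finset.filter_false_of_mem ?_
      rintro c hc ⟨hck, hpath⟩
      have hcorn := (Finset.mem_filter.mp hc).2
      have he := σ.isSECorner_elim hcorn
      have hp := (σ.seInPath_iff hI hcorn).mp hpath
      rw [hck] at hp
      exact hE ⟨c.1, by omega, hp.1, hp.2⟩
    rw [hfilter1, hfilter2]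
    simp

lemma turns_row_col {I : Finset (ℕ × ℕ)} (hI : σ.IsIdeal I) :
    ((Finset.range σ.a).filter
        (fun i => σ.rowProf I (i+1+1) < σ.rowProf I (i+1))).card
      = ((Finset.range σ.b).filter (fun l =>
          ∃ k, 1 ≤ k ∧ k ≤ σ.a ∧ σ.rowProf I k = l+1 ∧ σ.rowProf I (k+1) < l+1)).card := by
  apply Finset.card_bij (fun i _ => σ.rowProf I (i+1) - 1)
  · intro i hi
    simp only [Finset.mem_filter, Finset.mem_range] at hi ⊢
    obtain ⟨hia, hD⟩ := hi
    have h2 : σ.rowProf I (i+1) ≤ σ.b := σ.rowProf_le_b hI (i+1)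
    refine ⟨by omega, ⟨i+1, by omega, by omega, by omega, by omega⟩⟩
  · intro i1 hi1 i2 hi2 he
    simp only [Finset.mem_filter, Finset.mem_range] at hi1 hi2
    have hcomm : σ.rowProf I (i2+1) = σ.rowProf I (i1+1) := by omega
    have hh : σ.rowProf I (i2+1+1) < σ.rowProf I (i1+1) := by
      have := hi2.2
      omega
    have := σ.ENat_unique hI (l := σ.rowProf I (i1+1)) rfl hi1.2 hcomm hh
    omega
  · intro l hl
    simp only [Finset.mem_filter, Finset.mem_range] at hl
    obtain ⟨hlb, k, hk1, hk2, hk3, hk4⟩ := hl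
    have he : k - 1 + 1 = k := by omega
    refine ⟨k - 1, ?_, ?_⟩
    · simp only [Finset.mem_filter, Finset.mem_range]
      rw [he]
      exact ⟨by omega, by omega⟩
    · rw [he]
      omega

lemma bottom_row_iff {I : Finset (ℕ × ℕ)} (hI : σ.IsIdeal I) :
    (∃ i, i + 1 ≤ σ.a ∧ σ.rowProf I (i+1) = 0 ∧ 0 < σ.rowProf I i) ↔
      ¬ (σ.rowProf I (σ.a + 1) < σ.rowProf I σ.a) := by
  rw [σ.rowProf_of_gt I (by omega)]
  constructor
  · rintro ⟨i, hia, h1, h2⟩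
    have := σ.rowProf_anti hI (show i+1 ≤ σ.a from hia)
    omega
  · intro h
    push_neg at h
    have hra : σ.rowProf I σ.a = 0 := by omega
    set K := (Finset.Icc 1 σ.a).filter (fun k => σ.rowProf I k = 0) with hK
    have hKne : K.Nonempty :=
      ⟨σ.a, Finset.mem_filter.mpr ⟨Finset.mem_Icc.mpr ⟨σ.ha, le_rfl⟩, hra⟩⟩
    obtain ⟨k0, hk0K, hk0min⟩ : ∃ k0 ∈ K, ∀ k ∈ K, k0 ≤ k :=
      ⟨K.min' hKne, K.min'_mem hKne, fun k hk => K.min'_le k hk⟩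
    obtain ⟨hk0Icc, hk0r⟩ := Finset.mem_filter.mp hk0K
    rw [Finset.mem_Icc] at hk0Icc
    refine ⟨k0 - 1, by omega, by rw [show k0 - 1 + 1 = k0 by omega]; exact hk0r, ?_⟩
    by_cases h1 : k0 = 1
    · rw [h1]
      show 0 < σ.rowProf I (1-1)
      rw [show (1:ℕ) - 1 = 0 from rfl, σ.rowProf_zero]
      exact σ.hb
    · by_contra hcon
      push_neg at hcon
      have hmem : k0 - 1 ∈ K := Finset.mem_filter.mpr
        ⟨Finset.mem_Icc.mpr ⟨by omega, by omega⟩, by omega⟩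
      have := hk0min _ hmem
      omega

lemma EF_shift {I : Finset (ℕ × ℕ)} (hI : σ.IsIdeal I) {l : ℕ}
    (hl1 : 1 ≤ l) (hl2 : l < σ.b) :
    (∃ k, 1 ≤ k ∧ k ≤ σ.a ∧ σ.rowProf I k = l ∧ σ.rowProf I (k+1) < l) ↔
      (∃ i, i + 1 ≤ σ.a ∧ σ.rowProf I (i+1) = l ∧ l < σ.rowProf I i) := by
  constructor
  · rintro ⟨k, hk1, hk2, hk3, hk4⟩
    set K := (Finset.Icc 1 k).filter (fun n => σ.rowProf I n = l) with hK
    have hKne : K.Nonempty :=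
      ⟨k, Finset.mem_filter.mpr ⟨Finset.mem_Icc.mpr ⟨hk1, le_rfl⟩, hk3⟩⟩
    obtain ⟨k0, hk0K, hk0min⟩ : ∃ k0 ∈ K, ∀ n ∈ K, k0 ≤ n :=
      ⟨K.min' hKne, K.min'_mem hKne, fun n hn => K.min'_le n hn⟩
    obtain ⟨hk0Icc, hk0r⟩ := Finset.mem_filter.mp hk0K
    rw [Finset.mem_Icc] at hk0Icc
    refine ⟨k0 - 1, by omega, by rw [show k0 - 1 + 1 = k0 by omega]; exact hk0r, ?_⟩
    by_cases h1 : k0 = 1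
    · rw [h1]
      show l < σ.rowProf I (1-1)
      rw [show (1:ℕ) - 1 = 0 from rfl, σ.rowProf_zero]
      omega
    · by_contra hcon
      push_neg at hcon
      have hge : σ.rowProf I k0 ≤ σ.rowProf I (k0 - 1) := σ.rowProf_anti hI (by omega)
      have hmem : k0 - 1 ∈ K := Finset.mem_filter.mpr
        ⟨Finset.mem_Icc.mpr ⟨by omega, by omega⟩, by omega⟩
      have := hk0min _ hmem
      omega
  · rintro ⟨i, hia, h1, h2⟩
    set K := (Finset.Icc (i+1) σ.a).filter (fun n => σ.rowProf I n = l) with hK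
    have hKne : K.Nonempty :=
      ⟨i+1, Finset.mem_filter.mpr ⟨Finset.mem_Icc.mpr ⟨le_rfl, hia⟩, h1⟩⟩
    obtain ⟨k1, hk1K, hk1max⟩ : ∃ k1 ∈ K, ∀ n ∈ K, n ≤ k1 :=
      ⟨K.max' hKne, K.max'_mem hKne, fun n hn => K.le_max' n hn⟩
    obtain ⟨hk1Icc, hk1r⟩ := Finset.mem_filter.mp hk1K
    rw [Finset.mem_Icc] at hk1Icc
    refine ⟨k1, by omega, by omega, hk1r, ?_⟩
    by_cases hka : k1 = σ.a
    · rw [hka, σ.rowProf_of_gt I (by omega)]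
      omega
    · by_contra hcon
      push_neg at hcon
      have hle : σ.rowProf I (k1+1) ≤ σ.rowProf I k1 := σ.rowProf_anti_succ hI k1
      have hmem : k1 + 1 ∈ K := Finset.mem_filter.mpr
        ⟨Finset.mem_Icc.mpr ⟨by omega, by omega⟩, by omega⟩
      have := hk1max _ hmem
      omega

lemma jag_count_out {I : Finset (ℕ × ℕ)} (hI : σ.IsIdeal I) :
    ((Finset.range σ.a ×ˢ Finset.Icc 1 σ.b).filter
        (fun p => σ.CanToggleOut I (p.1+1, p.2))).card
      = (σ.cells.filter (fun p => σ.CanToggleOut I p)).card := by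
  apply Finset.card_bij (fun p _ => (p.1+1, p.2))
  · intro p hp
    simp only [Finset.mem_filter] at hp ⊢
    exact ⟨hI.1 hp.2.1, hp.2⟩
  · intro p1 h1 p2 h2 he
    rw [Prod.mk.injEq] at he
    exact Prod.ext (by omega) he.2
  · intro q hq
    simp only [Finset.mem_filter] at hq
    obtain ⟨hqc, hqout⟩ := hq
    obtain ⟨hq1, hq2, hq3, hq4⟩ := σ.mem_cells.mp hqc
    have he : q.1 - 1 + 1 = q.1 := by omega
    refine ⟨(q.1 - 1, q.2), ?_, ?_⟩
    · simp only [Finset.mem_filter, Finset.mem_product, Finset.mem_range, Finset.mem_Icc]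
      refine ⟨⟨by omega, by omega, le_trans hq4 (σ.lam_le_b _ hq1 hq2)⟩, ?_⟩
      show σ.CanToggleOut I (q.1 - 1 + 1, q.2)
      rw [he, Prod.mk.eta]
      exact hqout
    · show (q.1 - 1 + 1, q.2) = q
      rw [he, Prod.mk.eta]

lemma jag_count_in {I : Finset (ℕ × ℕ)} (hI : σ.IsIdeal I) :
    ((Finset.range σ.a ×ˢ Finset.Icc 1 σ.b).filter
        (fun p => σ.CanToggleIn I (p.1+1, p.2))).card
      = (σ.cells.filter (fun p => σ.CanToggleIn I p)).card := by
  apply Finset.card_bij (fun p _ => (p.1+1, p.2))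
  · intro p hp
    simp only [Finset.mem_filter] at hp ⊢
    exact ⟨hp.2.1, hp.2⟩
  · intro p1 h1 p2 h2 he
    rw [Prod.mk.injEq] at he
    exact Prod.ext (by omega) he.2
  · intro q hq
    simp only [Finset.mem_filter] at hq
    obtain ⟨hqc, hqin⟩ := hq
    obtain ⟨hq1, hq2, hq3, hq4⟩ := σ.mem_cells.mp hqc
    have he : q.1 - 1 + 1 = q.1 := by omega
    refine ⟨(q.1 - 1, q.2), ?_, ?_⟩
    · simp only [Finset.mem_filter, Finset.mem_product, Finset.mem_range, Finset.mem_Icc]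
      refine ⟨⟨by omega, by omega, le_trans hq4 (σ.lam_le_b _ hq1 hq2)⟩, ?_⟩
      show σ.CanToggleIn I (q.1 - 1 + 1, q.2)
      rw [he, Prod.mk.eta]
      exact hqin
    · show (q.1 - 1 + 1, q.2) = q
      rw [he, Prod.mk.eta]

lemma pr_eq_sum (μ : Finset (ℕ × ℕ) → ℝ) (E : Finset (ℕ × ℕ) → Prop) :
    σ.pr μ E = ∑ I ∈ σ.idealsFinset, (if E I then μ I else 0) :=
  Finset.sum_filter _ _

lemma pr_eq_sum' (μ : Finset (ℕ × ℕ) → ℝ) (E : Finset (ℕ × ℕ) → Prop) :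
    σ.pr μ E = ∑ I ∈ σ.idealsFinset, μ I * (if E I then (1:ℝ) else 0) := by
  rw [σ.pr_eq_sum]
  exact Finset.sum_congr rfl fun I _ => by split_ifs <;> ring

lemma pr_sum_eq {α : Type*} (s : Finset α) (μ : Finset (ℕ × ℕ) → ℝ)
    (g : α → Finset (ℕ × ℕ) → Prop) :
    ∑ x ∈ s, σ.pr μ (g x) =
      ∑ I ∈ σ.idealsFinset, μ I * ((s.filter (fun x => g x I)).card : ℝ) := by
  have h1 : ∀ x ∈ s, σ.pr μ (g x) = ∑ I ∈ σ.idealsFinset, (if g x I then μ I else 0) :=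
    fun x _ => σ.pr_eq_sum μ (g x)
  rw [Finset.sum_congr rfl h1, Finset.sum_comm]
  refine Finset.sum_congr rfl fun I _ => ?_
  rw [Finset.card_filter]
  push_cast
  rw [Finset.mul_sum]
  refine Finset.sum_congr rfl fun x _ => ?_
  split_ifs <;> ring

private lemma tri_sum (g : ℕ → ℝ) (n : ℕ) :
    ∑ k ∈ Finset.range n, ∑ m ∈ Finset.range (k+1), g m
      = ∑ m ∈ Finset.range n, ((n - m : ℕ) : ℝ) * g m := by
  induction n with
  | zero => simp
  | succ n ih =>
    have hcong : ∀ m ∈ Finset.range n,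
        ((n + 1 - m : ℕ) : ℝ) * g m = ((n - m : ℕ) : ℝ) * g m + g m := by
      intro m hm
      rw [Finset.mem_range] at hm
      rw [show (n + 1 - m : ℕ) = (n - m) + 1 by omega]
      push_cast
      ring
    have hR : ∑ m ∈ Finset.range (n+1), ((n + 1 - m : ℕ) : ℝ) * g m
        = (∑ m ∈ Finset.range n, ((n - m : ℕ) : ℝ) * g m)
          + ∑ m ∈ Finset.range (n+1), g m := by
      rw [Finset.sum_range_succ, Finset.sum_range_succ (fun m => g m),
        Finset.sum_congr rfl hcong, Finset.sum_add_distrib,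
        show n + 1 - n = 1 by omega]
      push_cast
      ring
    rw [Finset.sum_range_succ, ih, hR]

private lemma fiber_sum {α : Type*} (s : Finset α) (n : ℕ) (g : α → ℕ)
    (h : ∀ x ∈ s, g x ∈ Finset.range n) (w : ℕ → ℝ) (p : α → ℝ) :
    ∑ m ∈ Finset.range n, w m * ∑ x ∈ s.filter (fun x => g x = m), p x
      = ∑ x ∈ s, w (g x) * p x := by
  rw [← Finset.sum_fiberwise_of_maps_to h (fun x => w (g x) * p x)]
  refine Finset.sum_congr rfl fun m hm => ?_
  rw [Finset.mul_sum]
  refine Finset.sum_congr rfl fun x hx => ?_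
  rw [(Finset.mem_filter.mp hx).2]

end SkewShape

set_option maxHeartbeats 2000000 in
/-- Theorem 1.2 / Theorem 3.6, main theorem: for a connected skew shape
`σ` of height `a` and width `b` and any toggle-symmetric probability distribution `μ` on
`J(σ)`, the expected jaggedness of a `μ`-random subshape of `σ` is
`(2ab/(a+b)) · (1 + Σ_{c ∈ C(σ)} δ(c) · P_μ(c))`. -/
theorem SkewShape.expected_jaggedness (σ : SkewShape) (hconn : σ.Connected)
    (μ : Finset (ℕ × ℕ) → ℝ) (hμ : σ.IsProbDist μ) (hts : σ.ToggleSymmetric μ) :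
    σ.expect μ (fun I => (σ.jag I : ℝ)) =
      2 * (σ.a : ℝ) * (σ.b : ℝ) / ((σ.a : ℝ) + (σ.b : ℝ)) *
        (1 + σ.cornerCorrection μ) := by
  classical
  obtain ⟨hμ0, hμ1⟩ := hμ
  set t : ℕ → ℝ := fun k => σ.pr μ (fun I => σ.rowProf I (k+1) < σ.rowProf I k) with ht
  set eE : ℕ → ℝ := fun l => σ.pr μ (fun I =>
    ∃ k, 1 ≤ k ∧ k ≤ σ.a ∧ σ.rowProf I k = l ∧ σ.rowProf I (k+1) < l) with heE
  set fF : ℕ → ℝ := fun m => σ.pr μ (fun I =>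
    ∃ i, i + 1 ≤ σ.a ∧ σ.rowProf I (i+1) = m ∧ m < σ.rowProf I i) with hfF
  set N : ℕ → ℝ := fun m => ∑ c ∈ σ.nwCorners.filter (fun c => c.1 = m+1),
    σ.pr μ (SkewShape.NWInPath c) with hN
  set S : ℕ → ℝ := fun m => ∑ c ∈ σ.seCorners.filter (fun c => c.1 = m),
    σ.pr μ (SkewShape.SEInPath c) with hS
  set N' : ℕ → ℝ := fun m => ∑ c ∈ σ.nwCorners.filter (fun c => c.2 = m+1),
    σ.pr μ (SkewShape.NWInPath c) with hN'
  set S' : ℕ → ℝ := fun m => ∑ c ∈ σ.seCorners.filter (fun c => c.2 = m),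
    σ.pr μ (SkewShape.SEInPath c) with hS'
  set PN : ℝ := ∑ c ∈ σ.nwCorners, σ.pr μ (SkewShape.NWInPath c) with hPN
  set QN : ℝ := ∑ c ∈ σ.nwCorners, (c.1 : ℝ) * σ.pr μ (SkewShape.NWInPath c) with hQN
  set RN : ℝ := ∑ c ∈ σ.nwCorners, (c.2 : ℝ) * σ.pr μ (SkewShape.NWInPath c) with hRN
  set PS : ℝ := ∑ c ∈ σ.seCorners, σ.pr μ (SkewShape.SEInPath c) with hPS
  set QS : ℝ := ∑ c ∈ σ.seCorners, (c.1 : ℝ) * σ.pr μ (SkewShape.SEInPath c) with hQS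
  set RS : ℝ := ∑ c ∈ σ.seCorners, (c.2 : ℝ) * σ.pr μ (SkewShape.SEInPath c) with hRS
  have hideal : ∀ I ∈ σ.idealsFinset, σ.IsIdeal I := fun I hI => σ.mem_idealsFinset.mp hI
  -- toggle symmetry at arbitrary points
  have htog : ∀ p : ℕ × ℕ,
      σ.pr μ (fun I => σ.CanToggleIn I p) = σ.pr μ (fun I => σ.CanToggleOut I p) := by
    intro p
    by_cases hp : p ∈ σ.cells
    · exact hts p hp
    · rw [σ.pr_eq_sum, σ.pr_eq_sum]
      refine Finset.sum_congr rfl fun I hI => ?_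
      rw [if_neg (fun hin => hp hin.1), if_neg (fun hout => hp ((hideal I hI).1 hout.1))]
  -- row relations
  have hOrow : ∀ i, i < σ.a →
      (∑ j ∈ Finset.Icc 1 σ.b, σ.pr μ (fun I => σ.CanToggleOut I (i+1, j))) + N i
        = t (i+1) := by
    intro i hi
    simp only [ht, hN]
    rw [σ.pr_sum_eq (Finset.Icc 1 σ.b) μ (fun j I => σ.CanToggleOut I (i+1, j)),
      σ.pr_sum_eq (σ.nwCorners.filter (fun c => c.1 = i+1)) μ
        (fun c I => SkewShape.NWInPath c I),
      σ.pr_eq_sum' μ (fun I => σ.rowProf I (i+1+1) < σ.rowProf I (i+1)),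
      ← Finset.sum_add_distrib]
    refine Finset.sum_congr rfl fun I hI => ?_
    rw [Finset.filter_filter, ← mul_add]
    congr 1
    have hcount := σ.rowOut_count (hideal I hI) hconn
      (show 1 ≤ i+1 by omega) (show i+1 ≤ σ.a by omega)
    rw [← Nat.cast_add, hcount]
    split_ifs <;> norm_num
  have hIrow : ∀ i, i < σ.a →
      (∑ j ∈ Finset.Icc 1 σ.b, σ.pr μ (fun I => σ.CanToggleIn I (i+1, j))) + S i
        = t i := by
    intro i hi
    simp only [ht, hS]
    rw [σ.pr_sum_eq (Finset.Icc 1 σ.b) μ (fun j I => σ.CanToggleIn I (i+1, j)),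
      σ.pr_sum_eq (σ.seCorners.filter (fun c => c.1 = i)) μ
        (fun c I => SkewShape.SEInPath c I),
      σ.pr_eq_sum' μ (fun I => σ.rowProf I (i+1) < σ.rowProf I i),
      ← Finset.sum_add_distrib]
    refine Finset.sum_congr rfl fun I hI => ?_
    rw [Finset.filter_filter, ← mul_add]
    congr 1
    have hcount := σ.rowIn_count (hideal I hI) hconn hi
    rw [← Nat.cast_add, hcount]
    split_ifs <;> norm_num
  -- column relations
  have hOcol : ∀ m, m < σ.b →
      (∑ k ∈ Finset.Icc 1 σ.a, σ.pr μ (fun I => σ.CanToggleOut I (k, m+1))) + N' m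
        = eE (m+1) := by
    intro m hm
    simp only [heE, hN']
    rw [σ.pr_sum_eq (Finset.Icc 1 σ.a) μ (fun k I => σ.CanToggleOut I (k, m+1)),
      σ.pr_sum_eq (σ.nwCorners.filter (fun c => c.2 = m+1)) μ
        (fun c I => SkewShape.NWInPath c I),
      σ.pr_eq_sum' μ (fun I =>
        ∃ k, 1 ≤ k ∧ k ≤ σ.a ∧ σ.rowProf I k = m+1 ∧ σ.rowProf I (k+1) < m+1),
      ← Finset.sum_add_distrib]
    refine Finset.sum_congr rfl fun I hI => ?_
    rw [Finset.filter_filter, ← mul_add]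
    congr 1
    have hcount := σ.colOut_count (hideal I hI) hconn hm
    rw [← Nat.cast_add, hcount]
    split_ifs <;> norm_num
  have hIcol : ∀ m, m < σ.b →
      (∑ k ∈ Finset.Icc 1 σ.a, σ.pr μ (fun I => σ.CanToggleIn I (k, m+1))) + S' m
        = fF m := by
    intro m hm
    simp only [hfF, hS']
    rw [σ.pr_sum_eq (Finset.Icc 1 σ.a) μ (fun k I => σ.CanToggleIn I (k, m+1)),
      σ.pr_sum_eq (σ.seCorners.filter (fun c => c.2 = m)) μ
        (fun c I => SkewShape.SEInPath c I),
      σ.pr_eq_sum' μ (fun I =>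
        ∃ i, i + 1 ≤ σ.a ∧ σ.rowProf I (i+1) = m ∧ m < σ.rowProf I i),
      ← Finset.sum_add_distrib]
    refine Finset.sum_congr rfl fun I hI => ?_
    rw [Finset.filter_filter, ← mul_add]
    congr 1
    have hcount := σ.colIn_count (hideal I hI) hconn hm
    rw [← Nat.cast_add, hcount]
    split_ifs <;> norm_num
  have hrowtog : ∀ i, (∑ j ∈ Finset.Icc 1 σ.b, σ.pr μ (fun I => σ.CanToggleIn I (i+1, j)))
      = ∑ j ∈ Finset.Icc 1 σ.b, σ.pr μ (fun I => σ.CanToggleOut I (i+1, j)) :=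
    fun i => Finset.sum_congr rfl fun j _ => htog (i+1, j)
  have hcoltog : ∀ m, (∑ k ∈ Finset.Icc 1 σ.a, σ.pr μ (fun I => σ.CanToggleIn I (k, m+1)))
      = ∑ k ∈ Finset.Icc 1 σ.a, σ.pr μ (fun I => σ.CanToggleOut I (k, m+1)) :=
    fun m => Finset.sum_congr rfl fun k _ => htog (k, m+1)
  -- corner bounds
  have hnwmem : ∀ c ∈ σ.nwCorners,
      1 ≤ c.1 ∧ c.1 + 1 ≤ σ.a ∧ 1 ≤ c.2 ∧ c.2 ≤ σ.b ∧ c.2 + 1 ≤ σ.b := by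
    intro c hc
    have he := σ.isNWCorner_elim (Finset.mem_filter.mp hc).2
    have h1 := σ.lam_le_b (c.1+1) (by omega) (by omega)
    have h2 := σ.lam_le_b c.1 (by omega) (by omega)
    omega
  have hsemem : ∀ c ∈ σ.seCorners,
      1 ≤ c.1 ∧ c.1 + 1 ≤ σ.a ∧ 1 ≤ c.2 ∧ c.2 + 1 ≤ σ.b := by
    intro c hc
    have he := σ.isSECorner_elim (Finset.mem_filter.mp hc).2
    have h2 := σ.lam_le_b c.1 (by omega) (by omega)
    omega
  have hmapsN1 : ∀ c ∈ σ.nwCorners, (fun c : ℕ × ℕ => c.1 - 1) c ∈ Finset.range σ.a := by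
    intro c hc
    have := hnwmem c hc
    simp only [Finset.mem_range]
    omega
  have hmapsS1 : ∀ c ∈ σ.seCorners, (fun c : ℕ × ℕ => c.1) c ∈ Finset.range σ.a := by
    intro c hc
    have := hsemem c hc
    simp only [Finset.mem_range]
    omega
  have hmapsN2 : ∀ c ∈ σ.nwCorners, (fun c : ℕ × ℕ => c.2 - 1) c ∈ Finset.range σ.b := by
    intro c hc
    have := hnwmem c hc
    simp only [Finset.mem_range]
    omega
  have hmapsS2 : ∀ c ∈ σ.seCorners, (fun c : ℕ × ℕ => c.2) c ∈ Finset.range σ.b := by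
    intro c hc
    have := hsemem c hc
    simp only [Finset.mem_range]
    omega
  have hNrw : ∀ m : ℕ, σ.nwCorners.filter (fun c => c.1 = m+1)
      = σ.nwCorners.filter (fun c => c.1 - 1 = m) := by
    intro m
    refine Finset.filter_congr fun c hc => ?_
    have := hnwmem c hc
    omega
  have hN'rw : ∀ m : ℕ, σ.nwCorners.filter (fun c => c.2 = m+1)
      = σ.nwCorners.filter (fun c => c.2 - 1 = m) := by
    intro m
    refine Finset.filter_congr fun c hc => ?_
    have := hnwmem c hc
    omega
  -- fiber sums
  have hNsum1 : ∑ m ∈ Finset.range σ.a, N m = PN := by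
    simp only [hN, hPN, hNrw]
    have hf := SkewShape.fiber_sum σ.nwCorners σ.a (fun c => c.1 - 1)
      hmapsN1
      (fun _ => (1:ℝ)) (fun c => σ.pr μ (SkewShape.NWInPath c))
    simpa using hf
  have hSsum1 : ∑ m ∈ Finset.range σ.a, S m = PS := by
    simp only [hS, hPS]
    have hf := SkewShape.fiber_sum σ.seCorners σ.a (fun c => c.1)
      hmapsS1
      (fun _ => (1:ℝ)) (fun c => σ.pr μ (SkewShape.SEInPath c))
    simpa using hf
  have hN'sum1 : ∑ m ∈ Finset.range σ.b, N' m = PN := by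
    simp only [hN', hPN, hN'rw]
    have hf := SkewShape.fiber_sum σ.nwCorners σ.b (fun c => c.2 - 1)
      hmapsN2
      (fun _ => (1:ℝ)) (fun c => σ.pr μ (SkewShape.NWInPath c))
    simpa using hf
  have hS'sum1 : ∑ m ∈ Finset.range σ.b, S' m = PS := by
    simp only [hS', hPS]
    have hf := SkewShape.fiber_sum σ.seCorners σ.b (fun c => c.2)
      hmapsS2
      (fun _ => (1:ℝ)) (fun c => σ.pr μ (SkewShape.SEInPath c))
    simpa using hf
  have hNsumw : ∑ m ∈ Finset.range σ.a, ((σ.a - m : ℕ) : ℝ) * N m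
      = ((σ.a : ℝ) + 1) * PN - QN := by
    simp only [hN, hNrw]
    rw [SkewShape.fiber_sum σ.nwCorners σ.a (fun c => c.1 - 1)
      hmapsN1
      (fun m => ((σ.a - m : ℕ) : ℝ)) (fun c => σ.pr μ (SkewShape.NWInPath c))]
    simp only [hPN, hQN]
    rw [Finset.mul_sum, ← Finset.sum_sub_distrib]
    refine Finset.sum_congr rfl fun c hc => ?_
    have hb := hnwmem c hc
    rw [show (σ.a - (c.1 - 1) : ℕ) = σ.a + 1 - c.1 by omega, Nat.cast_sub (by omega)]
    push_cast
    ring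
  have hSsumw : ∑ m ∈ Finset.range σ.a, ((σ.a - m : ℕ) : ℝ) * S m
      = (σ.a : ℝ) * PS - QS := by
    simp only [hS]
    rw [SkewShape.fiber_sum σ.seCorners σ.a (fun c => c.1)
      hmapsS1
      (fun m => ((σ.a - m : ℕ) : ℝ)) (fun c => σ.pr μ (SkewShape.SEInPath c))]
    simp only [hPS, hQS]
    rw [Finset.mul_sum, ← Finset.sum_sub_distrib]
    refine Finset.sum_congr rfl fun c hc => ?_
    have hb := hsemem c hc
    rw [Nat.cast_sub (by omega)]
    ring
  have hN'sumw : ∑ m ∈ Finset.range σ.b, ((σ.b - m : ℕ) : ℝ) * N' m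
      = ((σ.b : ℝ) + 1) * PN - RN := by
    simp only [hN', hN'rw]
    rw [SkewShape.fiber_sum σ.nwCorners σ.b (fun c => c.2 - 1)
      hmapsN2
      (fun m => ((σ.b - m : ℕ) : ℝ)) (fun c => σ.pr μ (SkewShape.NWInPath c))]
    simp only [hPN, hRN]
    rw [Finset.mul_sum, ← Finset.sum_sub_distrib]
    refine Finset.sum_congr rfl fun c hc => ?_
    have hb := hnwmem c hc
    rw [show (σ.b - (c.2 - 1) : ℕ) = σ.b + 1 - c.2 by omega, Nat.cast_sub (by omega)]
    push_cast
    ring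
  have hS'sumw : ∑ m ∈ Finset.range σ.b, ((σ.b - m : ℕ) : ℝ) * S' m
      = (σ.b : ℝ) * PS - RS := by
    simp only [hS']
    rw [SkewShape.fiber_sum σ.seCorners σ.b (fun c => c.2)
      hmapsS2
      (fun m => ((σ.b - m : ℕ) : ℝ)) (fun c => σ.pr μ (SkewShape.SEInPath c))]
    simp only [hPS, hRS]
    rw [Finset.mul_sum, ← Finset.sum_sub_distrib]
    refine Finset.sum_congr rfl fun c hc => ?_
    have hb := hsemem c hc
    rw [Nat.cast_sub (by omega)]
    ring
  -- telescopes
  have hT : ∀ k, k ≤ σ.a → t k = t 0 + ∑ m ∈ Finset.range k, (N m - S m) := by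
    intro k
    induction k with
    | zero => intro _; simp
    | succ k ih =>
      intro hk
      have h1 := hOrow k (by omega)
      have h2 := hIrow k (by omega)
      have h3 := hrowtog k
      have h4 := ih (by omega)
      rw [Finset.sum_range_succ]
      linarith
  have hTa : t σ.a = t 0 + (PN - PS) := by
    have h := hT σ.a le_rfl
    rw [Finset.sum_sub_distrib, hNsum1, hSsum1] at h
    exact h
  have hfFeE : ∀ l, 1 ≤ l → l < σ.b → fF l = eE l := by
    intro l hl1 hl2
    simp only [hfF, heE]
    rw [σ.pr_eq_sum μ _, σ.pr_eq_sum μ _]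
    refine Finset.sum_congr rfl fun I hI => ?_
    have hiff := σ.EF_shift (hideal I hI) hl1 hl2
    exact if_congr hiff.symm rfl rfl
  have hE : ∀ m, m < σ.b → eE (m+1) = fF 0 + ∑ l ∈ Finset.range (m+1), (N' l - S' l) := by
    intro m
    induction m with
    | zero =>
      intro h0
      have h1 := hOcol 0 h0
      have h2 := hIcol 0 h0
      have h3 := hcoltog 0
      rw [Finset.sum_range_one]
      linarith
    | succ m ih =>
      intro hm
      have h1 := hOcol (m+1) hm
      have h2 := hIcol (m+1) hm
      have h3 := hcoltog (m+1)
      have h4 := hfFeE (m+1) (by omega) (by omega)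
      have h5 := ih (by omega)
      rw [Finset.sum_range_succ]
      linarith
  -- equality of row and column turn counts
  have hST : ∑ i ∈ Finset.range σ.a, t (i+1) = ∑ l ∈ Finset.range σ.b, eE (l+1) := by
    simp only [ht, heE]
    rw [σ.pr_sum_eq (Finset.range σ.a) μ
        (fun i I => σ.rowProf I (i+1+1) < σ.rowProf I (i+1)),
      σ.pr_sum_eq (Finset.range σ.b) μ (fun l I =>
        ∃ k, 1 ≤ k ∧ k ≤ σ.a ∧ σ.rowProf I k = l+1 ∧ σ.rowProf I (k+1) < l+1)]
    refine Finset.sum_congr rfl fun I hI => ?_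
    congr 1
    have hcnt := σ.turns_row_col (hideal I hI)
    rw [Finset.filter_congr_decidable]
    exact_mod_cast hcnt
  -- total mass
  have hF0 : fF 0 + t σ.a = 1 := by
    simp only [hfF, ht]
    rw [σ.pr_eq_sum' μ (fun I =>
        ∃ i, i + 1 ≤ σ.a ∧ σ.rowProf I (i+1) = 0 ∧ 0 < σ.rowProf I i),
      σ.pr_eq_sum' μ (fun I => σ.rowProf I (σ.a+1) < σ.rowProf I σ.a),
      ← Finset.sum_add_distrib]
    refine Eq.trans (Finset.sum_congr rfl fun I hI => ?_) hμ1
    rw [← mul_add]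
    have hiff := σ.bottom_row_iff (hideal I hI)
    by_cases h1 : (∃ i, i + 1 ≤ σ.a ∧ σ.rowProf I (i+1) = 0 ∧ 0 < σ.rowProf I i)
    · rw [if_pos h1, if_neg (hiff.mp h1)]
      norm_num
    · rw [if_neg h1, if_pos (by by_contra h2; exact h1 (hiff.mpr h2))]
      norm_num
  -- jaggedness expectation
  have hOsum' : ∑ i ∈ Finset.range σ.a, ∑ j ∈ Finset.Icc 1 σ.b,
      σ.pr μ (fun I => σ.CanToggleOut I (i+1, j))
      = ∑ I ∈ σ.idealsFinset,
          μ I * ((σ.cells.filter (fun p => σ.CanToggleOut I p)).card : ℝ) := by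
    rw [← Finset.sum_product']
    rw [σ.pr_sum_eq (Finset.range σ.a ×ˢ Finset.Icc 1 σ.b) μ
      (fun p I => σ.CanToggleOut I (p.1+1, p.2))]
    refine Finset.sum_congr rfl fun I hI => ?_
    congr 1
    have hcnt := σ.jag_count_out (hideal I hI)
    exact_mod_cast hcnt
  have hIsum' : ∑ i ∈ Finset.range σ.a, ∑ j ∈ Finset.Icc 1 σ.b,
      σ.pr μ (fun I => σ.CanToggleIn I (i+1, j))
      = ∑ I ∈ σ.idealsFinset,
          μ I * ((σ.cells.filter (fun p => σ.CanToggleIn I p)).card : ℝ) := by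
    rw [← Finset.sum_product']
    rw [σ.pr_sum_eq (Finset.range σ.a ×ˢ Finset.Icc 1 σ.b) μ
      (fun p I => σ.CanToggleIn I (p.1+1, p.2))]
    refine Finset.sum_congr rfl fun I hI => ?_
    congr 1
    have hcnt := σ.jag_count_in (hideal I hI)
    exact_mod_cast hcnt
  have hexp : σ.expect μ (fun I => (σ.jag I : ℝ))
      = (∑ i ∈ Finset.range σ.a, ∑ j ∈ Finset.Icc 1 σ.b,
          σ.pr μ (fun I => σ.CanToggleOut I (i+1, j)))
        + ∑ i ∈ Finset.range σ.a, ∑ j ∈ Finset.Icc 1 σ.b,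
          σ.pr μ (fun I => σ.CanToggleIn I (i+1, j)) := by
    rw [hOsum', hIsum', ← Finset.sum_add_distrib]
    unfold SkewShape.expect SkewShape.jag
    refine Finset.sum_congr rfl fun I hI => ?_
    push_cast
    ring
  have hOS : ∑ i ∈ Finset.range σ.a, ∑ j ∈ Finset.Icc 1 σ.b,
      σ.pr μ (fun I => σ.CanToggleOut I (i+1, j))
      = (∑ i ∈ Finset.range σ.a, t (i+1)) - PN := by
    have hpt : ∀ i ∈ Finset.range σ.a, ∑ j ∈ Finset.Icc 1 σ.b,
        σ.pr μ (fun I => σ.CanToggleOut I (i+1, j)) = t (i+1) - N i := by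
      intro i hi
      have := hOrow i (Finset.mem_range.mp hi)
      linarith
    rw [Finset.sum_congr rfl hpt, Finset.sum_sub_distrib, hNsum1]
  have hIS : ∑ i ∈ Finset.range σ.a, ∑ j ∈ Finset.Icc 1 σ.b,
      σ.pr μ (fun I => σ.CanToggleIn I (i+1, j))
      = (∑ i ∈ Finset.range σ.a, t i) - PS := by
    have hpt : ∀ i ∈ Finset.range σ.a, ∑ j ∈ Finset.Icc 1 σ.b,
        σ.pr μ (fun I => σ.CanToggleIn I (i+1, j)) = t i - S i := by
      intro i hi
      have := hIrow i (Finset.mem_range.mp hi)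
      linarith
    rw [Finset.sum_congr rfl hpt, Finset.sum_sub_distrib, hSsum1]
  have hshift : ∑ i ∈ Finset.range σ.a, t i
      = (∑ i ∈ Finset.range σ.a, t (i+1)) + t 0 - t σ.a := by
    have h1 := Finset.sum_range_succ t σ.a
    have h2 := Finset.sum_range_succ' t σ.a
    rw [h1] at h2
    linarith
  have hSTval : ∑ i ∈ Finset.range σ.a, t (i+1)
      = (σ.a : ℝ) * t 0 + (((σ.a:ℝ)+1) * PN - QN) - ((σ.a:ℝ) * PS - QS) := by
    have hpt : ∀ i ∈ Finset.range σ.a,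
        t (i+1) = t 0 + ∑ m ∈ Finset.range (i+1), (N m - S m) :=
      fun i hi => hT (i+1) (by have := Finset.mem_range.mp hi; omega)
    rw [Finset.sum_congr rfl hpt, Finset.sum_add_distrib, Finset.sum_const,
      Finset.card_range, nsmul_eq_mul, SkewShape.tri_sum]
    have hsplit : ∑ m ∈ Finset.range σ.a, ((σ.a - m : ℕ):ℝ) * (N m - S m)
        = (∑ m ∈ Finset.range σ.a, ((σ.a - m:ℕ):ℝ) * N m)
          - ∑ m ∈ Finset.range σ.a, ((σ.a - m:ℕ):ℝ) * S m := by
      rw [← Finset.sum_sub_distrib]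
      exact Finset.sum_congr rfl fun m _ => by ring
    rw [hsplit, hNsumw, hSsumw]
    ring
  have hSEval : ∑ l ∈ Finset.range σ.b, eE (l+1)
      = (σ.b : ℝ) * fF 0 + (((σ.b:ℝ)+1) * PN - RN) - ((σ.b:ℝ) * PS - RS) := by
    have hpt : ∀ l ∈ Finset.range σ.b,
        eE (l+1) = fF 0 + ∑ m ∈ Finset.range (l+1), (N' m - S' m) :=
      fun l hl => hE l (Finset.mem_range.mp hl)
    rw [Finset.sum_congr rfl hpt, Finset.sum_add_distrib, Finset.sum_const,
      Finset.card_range, nsmul_eq_mul, SkewShape.tri_sum]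
    have hsplit : ∑ m ∈ Finset.range σ.b, ((σ.b - m : ℕ):ℝ) * (N' m - S' m)
        = (∑ m ∈ Finset.range σ.b, ((σ.b - m:ℕ):ℝ) * N' m)
          - ∑ m ∈ Finset.range σ.b, ((σ.b - m:ℕ):ℝ) * S' m := by
      rw [← Finset.sum_sub_distrib]
      exact Finset.sum_congr rfl fun m _ => by ring
    rw [hsplit, hN'sumw, hS'sumw]
    ring
  -- the corner correction in terms of atoms
  have ha' : (0:ℝ) < (σ.a : ℝ) := by exact_mod_cast σ.ha
  have hb' : (0:ℝ) < (σ.b : ℝ) := by exact_mod_cast σ.hb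
  have hab : (σ.a:ℝ) + (σ.b:ℝ) ≠ 0 := by positivity
  have hccnw : ∑ c ∈ σ.nwCorners, σ.nwDisp c * σ.pr μ (SkewShape.NWInPath c)
      = PN - QN / (σ.a:ℝ) - RN / (σ.b:ℝ) := by
    simp only [hPN, hQN, hRN]
    rw [Finset.sum_div, Finset.sum_div, ← Finset.sum_sub_distrib, ← Finset.sum_sub_distrib]
    refine Finset.sum_congr rfl fun c hc => ?_
    unfold SkewShape.nwDisp
    ring
  have hccse : ∑ c ∈ σ.seCorners, σ.seDisp c * σ.pr μ (SkewShape.SEInPath c)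
      = -PS + QS / (σ.a:ℝ) + RS / (σ.b:ℝ) := by
    simp only [hPS, hQS, hRS]
    have hpt : ∀ c ∈ σ.seCorners, σ.seDisp c * σ.pr μ (SkewShape.SEInPath c)
        = -(σ.pr μ (SkewShape.SEInPath c))
          + ((c.1:ℝ) * σ.pr μ (SkewShape.SEInPath c) / (σ.a:ℝ)
            + (c.2:ℝ) * σ.pr μ (SkewShape.SEInPath c) / (σ.b:ℝ)) := by
      intro c hc
      unfold SkewShape.seDisp
      ring
    rw [Finset.sum_congr rfl hpt, Finset.sum_add_distrib, Finset.sum_add_distrib,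
      Finset.sum_neg_distrib, ← Finset.sum_div, ← Finset.sum_div]
    ring
  have hcc : σ.cornerCorrection μ
      = (PN - QN / (σ.a:ℝ) - RN / (σ.b:ℝ)) + (-PS + QS / (σ.a:ℝ) + RS / (σ.b:ℝ)) := by
    unfold SkewShape.cornerCorrection
    rw [hccnw, hccse]
  -- solve the linear system
  have hkey : ((σ.a:ℝ) + σ.b) * t 0
      = σ.b - σ.a * PN + QN - RN + σ.a * PS - QS + RS := by
    have h5 : (σ.a : ℝ) * t 0 + (((σ.a:ℝ)+1) * PN - QN) - ((σ.a:ℝ) * PS - QS)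
        = (σ.b : ℝ) * fF 0 + (((σ.b:ℝ)+1) * PN - RN) - ((σ.b:ℝ) * PS - RS) := by
      rw [← hSTval, ← hSEval, hST]
    have h6 : fF 0 = 1 - t 0 - PN + PS := by
      have := hTa
      linarith [hF0]
    rw [h6] at h5
    linear_combination h5
  have ht0 : t 0 = (σ.b - σ.a * PN + QN - RN + σ.a * PS - QS + RS) / ((σ.a:ℝ) + σ.b) := by
    rw [eq_div_iff hab]
    linear_combination hkey
  rw [hexp, hOS, hIS, hshift, hTa, hSTval, ht0, hcc]
  field_simp
  ring
end
end

section
/- For any finite poset P and any m ≥ rk(P), where rk(P) is the maximum length of a chain of P, the strict distribution μ_{m,<} on J(P) is toggle-symmetric. -/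
open Finset
open scoped Classical

noncomputable section

variable {α : Type*} [Fintype α] [PartialOrder α]

/-- Strict reverse `P`-partitions of height `m`: maps `α → {0,1,…,m}` that are strictly
order-preserving. -/
def srpp (α : Type*) [Fintype α] [PartialOrder α] (m : ℕ) : Finset (α → Fin (m + 1)) :=
  Finset.univ.filter fun ℓ => ∀ p q : α, p < q → ℓ p < ℓ q

/-- The rank of the poset `α`: the maximum length (number of elements minus one) of a
chain of `α`. -/
def posetRank (α : Type*) [Fintype α] [PartialOrder α] : ℕ :=
  Finset.sup
    (Finset.univ.filter fun C : Finset α => IsChain (· ≤ ·) (C : Set α))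
    (fun C : Finset α => C.card - 1)

/-- The strict distribution `μ_{m,<}` on `J(P)`: the distribution of `ℓ⁻¹({0,…,k−1})` for a
uniformly random strict reverse `P`-partition `ℓ` of height `m` and uniform
`k ∈ {0,1,…,m+1}`. -/
def muStrict (α : Type*) [Fintype α] [PartialOrder α] (m : ℕ) (I : Finset α) : ℝ :=
  (∑ ℓ ∈ srpp α m, ∑ k ∈ Finset.range (m + 2),
      if Finset.univ.filter (fun p => (ℓ p : ℕ) < k) = I then (1 : ℝ) else 0) /
    ((srpp α m).card * (m + 2))


namespace MuStrictAux

variable {α : Type*} [Fintype α] [PartialOrder α] {m : ℕ}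

/-- The lower set of a labeling at threshold `k`. -/
def lowerSet (ℓ : α → Fin (m + 1)) (k : ℕ) : Finset α :=
  Finset.univ.filter fun p => (ℓ p : ℕ) < k

lemma mem_lowerSet {ℓ : α → Fin (m + 1)} {k : ℕ} {p : α} :
    p ∈ lowerSet ℓ k ↔ (ℓ p : ℕ) < k := by simp [lowerSet]

lemma mem_srpp {ℓ : α → Fin (m + 1)} :
    ℓ ∈ srpp α m ↔ ∀ p q : α, p < q → ℓ p < ℓ q := by simp [srpp]

lemma lowerSet_isIdeal {ℓ : α → Fin (m + 1)} (hℓ : ℓ ∈ srpp α m) (k : ℕ) :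
    IsIdeal (lowerSet ℓ k) := by
  rw [mem_srpp] at hℓ
  intro p hp q hq
  rw [mem_lowerSet] at *
  rcases eq_or_lt_of_le hq with rfl | h
  · exact hp
  · exact lt_trans (hℓ q p h) hp

lemma canToggleIn_iff {ℓ : α → Fin (m + 1)} (hℓ : ℓ ∈ srpp α m) (p : α) (k : ℕ) :
    CanToggleIn (lowerSet ℓ k) p ↔ k ≤ (ℓ p : ℕ) ∧ ∀ q : α, q < p → (ℓ q : ℕ) < k := by
  rw [mem_srpp] at hℓ
  constructor
  · rintro ⟨hnot, hins⟩
    refine ⟨not_lt.mp (fun h => hnot (mem_lowerSet.mpr h)), fun q hq => ?_⟩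
    have : q ∈ insert p (lowerSet ℓ k) := hins p (mem_insert_self _ _) q hq.le
    rcases mem_insert.mp this with rfl | hmem
    · exact absurd rfl hq.ne
    · exact mem_lowerSet.mp hmem
  · rintro ⟨hk, hq⟩
    refine ⟨fun h => absurd (mem_lowerSet.mp h) (not_lt.mpr hk), ?_⟩
    intro r hr q hqr
    rcases eq_or_ne q p with rfl | hqp
    · exact mem_insert_self _ _
    refine mem_insert_of_mem (mem_lowerSet.mpr ?_)
    rcases mem_insert.mp hr with rfl | hrmem
    · exact hq q (lt_of_le_of_ne hqr hqp)
    · have hrk := mem_lowerSet.mp hrmem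
      rcases eq_or_lt_of_le hqr with rfl | h
      · exact hrk
      · exact lt_trans (hℓ q r h) hrk

lemma canToggleOut_iff {ℓ : α → Fin (m + 1)} (hℓ : ℓ ∈ srpp α m) (p : α) (k : ℕ) :
    CanToggleOut (lowerSet ℓ k) p ↔ (ℓ p : ℕ) < k ∧ ∀ r : α, p < r → k ≤ (ℓ r : ℕ) := by
  rw [mem_srpp] at hℓ
  constructor
  · rintro ⟨hmem, hers⟩
    refine ⟨mem_lowerSet.mp hmem, fun r hr => ?_⟩
    by_contra h
    have hrmem : r ∈ (lowerSet ℓ k).erase p :=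
      mem_erase.mpr ⟨hr.ne', mem_lowerSet.mpr (not_le.mp h)⟩
    have := hers r hrmem p hr.le
    exact (mem_erase.mp this).1 rfl
  · rintro ⟨hk, hr⟩
    refine ⟨mem_lowerSet.mpr hk, ?_⟩
    intro r hrmem q hqr
    obtain ⟨hrp, hrI⟩ := mem_erase.mp hrmem
    have hrk := mem_lowerSet.mp hrI
    have hqk : (ℓ q : ℕ) < k := by
      rcases eq_or_lt_of_le hqr with rfl | h
      · exact hrk
      · exact lt_trans (hℓ q r h) hrk
    refine mem_erase.mpr ⟨?_, mem_lowerSet.mpr hqk⟩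
    intro h
    rw [h] at hqk hqr
    exact absurd hrk (not_lt.mpr (hr r (lt_of_le_of_ne hqr hrp.symm)))

lemma prIdeal_muStrict (E : Finset α → Prop) :
    prIdeal (muStrict α m) E =
      (∑ ℓ ∈ srpp α m, ∑ k ∈ Finset.range (m + 2),
        if E (lowerSet ℓ k) then (1 : ℝ) else 0) /
      (((srpp α m).card : ℝ) * (m + 2)) := by
  unfold prIdeal muStrict
  rw [← Finset.sum_div]
  congr 1
  rw [Finset.sum_comm]
  refine Finset.sum_congr rfl fun ℓ hℓ => ?_
  rw [Finset.sum_comm]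
  refine Finset.sum_congr rfl fun k _ => ?_
  have hls : Finset.univ.filter (fun p => (ℓ p : ℕ) < k) = lowerSet ℓ k := rfl
  by_cases hE : E (lowerSet ℓ k)
  · rw [if_pos hE, Finset.sum_eq_single (lowerSet ℓ k)]
    · rw [hls, if_pos rfl]
    · intro I hI hne
      rw [hls, if_neg (fun h => hne h.symm)]
    · intro h
      exact absurd (Finset.mem_filter.mpr ⟨Finset.mem_filter.mpr
        ⟨Finset.mem_univ _, lowerSet_isIdeal hℓ k⟩, hE⟩) h
  · rw [if_neg hE, Finset.sum_eq_zero]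
    intro I hI
    rw [hls, if_neg]
    rintro rfl
    exact hE (Finset.mem_filter.mp hI).2

lemma update_mem_srpp {ℓ : α → Fin (m + 1)} (hℓ : ℓ ∈ srpp α m) (p : α) (v : Fin (m + 1))
    (h1 : ∀ q : α, q < p → (ℓ q : ℕ) < (v : ℕ))
    (h2 : ∀ r : α, p < r → (v : ℕ) < (ℓ r : ℕ)) :
    Function.update ℓ p v ∈ srpp α m := by
  rw [mem_srpp] at hℓ ⊢
  intro a b hab
  simp only [Function.update_apply]
  split_ifs with ha hb hb
  · rw [ha, hb] at hab; exact absurd hab (lt_irrefl p)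
  · exact Fin.lt_def.mpr (h2 b (ha ▸ hab))
  · exact Fin.lt_def.mpr (h1 a (hb ▸ hab))
  · exact hℓ a b hab

lemma key_count (p : α) :
    (((srpp α m) ×ˢ Finset.range (m + 2)).filter
        (fun x => CanToggleIn (lowerSet x.1 x.2) p)).card =
    (((srpp α m) ×ˢ Finset.range (m + 2)).filter
        (fun x => CanToggleOut (lowerSet x.1 x.2) p)).card := by
  refine Finset.card_bij'
    (fun x _ => (Function.update x.1 p ⟨min x.2 m, by omega⟩, (x.1 p : ℕ) + 1))
    (fun x _ => (Function.update x.1 p ⟨min (x.2 - 1) m, by omega⟩, (x.1 p : ℕ)))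
    ?_ ?_ ?_ ?_
  · -- hi
    rintro ⟨ℓ, k⟩ hx
    simp only [Finset.mem_filter, Finset.mem_product] at hx
    obtain ⟨⟨hℓ, hk2⟩, hIn⟩ := hx
    dsimp only
    obtain ⟨hkp, hq⟩ := (canToggleIn_iff hℓ p k).mp hIn
    have hpm : (ℓ p : ℕ) ≤ m := Nat.lt_succ_iff.mp (ℓ p).isLt
    have hkm : min k m = k := min_eq_left (le_trans hkp hpm)
    have hmem : Function.update ℓ p ⟨min k m, by omega⟩ ∈ srpp α m := by
      refine update_mem_srpp hℓ p _ ?_ ?_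
      · intro q hqp; simpa [hkm] using hq q hqp
      · intro r hrp
        have := Fin.lt_def.mp ((mem_srpp.mp hℓ) p r hrp)
        simp only [hkm]
        omega
    refine Finset.mem_filter.mpr ⟨Finset.mem_product.mpr ⟨hmem, ?_⟩, ?_⟩
    · simp only [Finset.mem_range]; omega
    · rw [canToggleOut_iff hmem p]
      constructor
      · rw [Function.update_self]; simp only [hkm]; omega
      · intro r hrp
        rw [Function.update_of_ne (ne_of_gt hrp)]
        have := Fin.lt_def.mp ((mem_srpp.mp hℓ) p r hrp)
        omega
  · -- hj
    rintro ⟨ℓ, k⟩ hx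
    simp only [Finset.mem_filter, Finset.mem_product] at hx
    obtain ⟨⟨hℓ, hk2⟩, hOut⟩ := hx
    dsimp only
    obtain ⟨hkp, hr⟩ := (canToggleOut_iff hℓ p k).mp hOut
    have hpm : (ℓ p : ℕ) ≤ m := Nat.lt_succ_iff.mp (ℓ p).isLt
    have hk2' : k < m + 2 := Finset.mem_range.mp hk2
    have hkm : min (k - 1) m = k - 1 := min_eq_left (by omega)
    have hmem : Function.update ℓ p ⟨min (k - 1) m, by omega⟩ ∈ srpp α m := by
      refine update_mem_srpp hℓ p _ ?_ ?_
      · intro q hqp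
        have := Fin.lt_def.mp ((mem_srpp.mp hℓ) q p hqp)
        simp only [hkm]
        omega
      · intro r hrp
        have := hr r hrp
        simp only [hkm]
        omega
    refine Finset.mem_filter.mpr ⟨Finset.mem_product.mpr ⟨hmem, ?_⟩, ?_⟩
    · simp only [Finset.mem_range]; omega
    · rw [canToggleIn_iff hmem p]
      constructor
      · rw [Function.update_self]; simp only [hkm]; omega
      · intro q hqp
        rw [Function.update_of_ne (ne_of_lt hqp)]
        have := Fin.lt_def.mp ((mem_srpp.mp hℓ) q p hqp)
        omega
  · -- left inverse
    rintro ⟨ℓ, k⟩ hx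
    simp only [Finset.mem_filter, Finset.mem_product] at hx
    obtain ⟨⟨hℓ, hk2⟩, hIn⟩ := hx
    dsimp only
    obtain ⟨hkp, hq⟩ := (canToggleIn_iff hℓ p k).mp hIn
    have hpm : (ℓ p : ℕ) ≤ m := Nat.lt_succ_iff.mp (ℓ p).isLt
    have hkm : min k m = k := min_eq_left (le_trans hkp hpm)
    simp only [Function.update_self, Function.update_idem]
    refine Prod.ext ?_ ?_
    · show Function.update ℓ p _ = ℓ
      have : (⟨min ((ℓ p : ℕ) + 1 - 1) m, by omega⟩ : Fin (m + 1)) = ℓ p := by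
        apply Fin.ext
        simp only [Fin.val_mk]
        omega
      rw [this, Function.update_eq_self]
    · show ((⟨min k m, by omega⟩ : Fin (m + 1)) : ℕ) = k
      simp [hkm]
  · -- right inverse
    rintro ⟨ℓ, k⟩ hx
    simp only [Finset.mem_filter, Finset.mem_product] at hx
    obtain ⟨⟨hℓ, hk2⟩, hOut⟩ := hx
    dsimp only
    obtain ⟨hkp, hr⟩ := (canToggleOut_iff hℓ p k).mp hOut
    have hpm : (ℓ p : ℕ) ≤ m := Nat.lt_succ_iff.mp (ℓ p).isLt
    have hk2' : k < m + 2 := Finset.mem_range.mp hk2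
    have hkm : min (k - 1) m = k - 1 := min_eq_left (by omega)
    simp only [Function.update_self, Function.update_idem]
    refine Prod.ext ?_ ?_
    · show Function.update ℓ p _ = ℓ
      have : (⟨min ((ℓ p : ℕ)) m, by omega⟩ : Fin (m + 1)) = ℓ p := by
        apply Fin.ext
        simp only [Fin.val_mk]
        omega
      rw [this, Function.update_eq_self]
    · show ((⟨min (k - 1) m, by omega⟩ : Fin (m + 1)) : ℕ) + 1 = k
      simp only [Fin.val_mk, hkm]
      omega

end MuStrictAux

/-- Lemma 2.7, strict case: for any finite poset and any `m ≥ rk(P)`,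
the strict distribution `μ_{m,<}` is toggle-symmetric. -/
theorem muStrict_toggleSymmetric (α : Type*) [Fintype α] [PartialOrder α]
    (m : ℕ) (hm : posetRank α ≤ m) : ToggleSymmetric (muStrict α m) := by
  intro p
  rw [MuStrictAux.prIdeal_muStrict, MuStrictAux.prIdeal_muStrict]
  congr 1
  rw [← Finset.sum_product', ← Finset.sum_product', Finset.sum_boole, Finset.sum_boole,
    MuStrictAux.key_count p]
end
end

section
/- For any finite poset P, the uniform probability distribution on the set J(P) of order ideals of P is toggle-symmetric. -/
open Finset
open scoped Classical

noncomputable section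

variable {α : Type*} [Fintype α] [PartialOrder α]

/-- for any finite poset, the uniform distribution on the set `J(P)` of
order ideals is toggle-symmetric. -/
theorem uniform_toggleSymmetric (α : Type*) [Fintype α] [PartialOrder α] :
    ToggleSymmetric (fun _ : Finset α => (((idealsFinset α).card : ℝ))⁻¹) := by
  intro p
  unfold prIdeal
  rw [Finset.sum_const, Finset.sum_const]
  congr 1
  apply Finset.card_bij (fun I _ => insert p I)
  · intro I hI
    simp only [idealsFinset, Finset.mem_filter, Finset.mem_univ, true_and] at hI ⊢
    obtain ⟨hIid, hpI, hins⟩ := hI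
    refine ⟨hins, ?_⟩
    unfold CanToggleOut
    refine ⟨Finset.mem_insert_self p I, ?_⟩
    rwa [Finset.erase_insert hpI]
  · intro I hI J hJ h
    simp only [idealsFinset, Finset.mem_filter, Finset.mem_univ, true_and] at hI hJ
    obtain ⟨_, hpI, _⟩ := hI
    obtain ⟨_, hpJ, _⟩ := hJ
    have := congrArg (Finset.erase · p) h
    simpa [Finset.erase_insert hpI, Finset.erase_insert hpJ] using this
  · intro J hJ
    simp only [idealsFinset, Finset.mem_filter, Finset.mem_univ, true_and] at hJ
    obtain ⟨hJid, hpJ, herase⟩ := hJ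
    refine ⟨J.erase p, ?_, Finset.insert_erase hpJ⟩
    simp only [idealsFinset, Finset.mem_filter, Finset.mem_univ, true_and]
    refine ⟨herase, Finset.notMem_erase p J, ?_⟩
    rwa [Finset.insert_erase hpJ]
end
end
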